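/- arXiv:math/0506063 — 8 statements merged into one kernel-verified Lean document; each statement's English description precedes it below -/
import Mathlib

section
/- Let f and g be commuting orientation-preserving homeomorphisms of [0,1), with f a C^{1+bv} diffeomorphism (derivative of bounded variation on compact subintervals of [0,1)) and g a C^1 diffeomorphism. If f has no fixed point in (0,1) and g has a fixed point in (0,1), then g is the identity. (Kopell's Lemma.) -/
/-!
Replacing `f` by its inverse we may assume `f x < x` on `(0, 1)`. If `g b = b`, the points
`f^[m] b` are fixed by `g` and tend to `0`, so `g' 0 = 1`. Differentiating
`g^[n] ∘ f^[m] = f^[m] ∘ g^[n]` at `x` gives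
`(g^[n])' (f^[m] x) * (f^[m])' x = (f^[m])' (g^[n] x) * (g^[n])' x`.
For `x, g^[n] x` in the fundamental domain `[f b, b]` the distortion
`(f^[m])' (g^[n] x) / (f^[m])' x` is at most `exp V`, where `V` is the variation of `log f'` on
`(0, b]`, because the intervals `f^[k] '' [f b, b]` tile `(0, b]` (Denjoy's argument). Letting
`m → ∞` yields `(g^[n])' ≥ exp (-V)` on `[f b, b]` for all `n`, and a self-map of a compact
interval with uniformly expanding iterates is the identity. So `g = id` on every fundamental
domain `[f^[k+1] b, f^[k] b]`, and by conjugation with `f^[m]` on all of `(0, 1)`.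
-/

open Set Filter Topology

theorem StrictMonoOn.iterate {α : Type*} [Preorder α] {f : α → α} {s : Set α}
    (hf : StrictMonoOn f s) (hs : MapsTo f s s) (n : ℕ) : StrictMonoOn f^[n] s := by
  induction n with
  | zero => exact strictMonoOn_id
  | succ n ih =>
    intro x hx y hy hxy
    simp only [Function.iterate_succ_apply]
    exact ih (hs hx) (hs hy) (hf hx hy hxy)

theorem Set.MapsTo.antitone_iterate_of_map_le {α : Type*} [Preorder α] {f : α → α}
    {s : Set α} (hs : MapsTo f s s) (hf : ∀ x ∈ s, f x ≤ x) {x : α} (hx : x ∈ s) :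
    Antitone fun n ↦ f^[n] x :=
  antitone_nat_of_succ_le fun n ↦ by
    rw [Function.iterate_succ_apply']
    exact hf _ (hs.iterate n hx)

theorem Set.MapsTo.iterate_comm {α : Type*} {f g : α → α} {s : Set α} (hf : MapsTo f s s)
    (hg : MapsTo g s s) (hfg : ∀ x ∈ s, f (g x) = g (f x)) (m n : ℕ) {x : α} (hx : x ∈ s) :
    f^[m] (g^[n] x) = g^[n] (f^[m] x) := by
  have hcomm : Function.Commute (hf.restrict f s s) (hg.restrict g s s) :=
    fun y ↦ Subtype.ext (hfg y y.2)
  have := congrArg Subtype.val (hcomm.iterate_iterate m n ⟨x, hx⟩)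
  simpa only [Function.comp_apply, MapsTo.iterate_restrict, MapsTo.val_restrict_apply] using this

theorem StrictMonoOn.of_invOn {α β : Type*} [LinearOrder α] [Preorder β] {f : α → β}
    {g : β → α} {s : Set α} {t : Set β} (hf : StrictMonoOn f s) (hinv : InvOn g f s t)
    (hg : MapsTo g t s) : StrictMonoOn g t := by
  intro y₁ hy₁ y₂ hy₂ hlt
  by_contra! hle
  have := hf.monotoneOn (hg hy₂) (hg hy₁) hle
  rw [hinv.2 hy₁, hinv.2 hy₂] at this
  exact (hlt.trans_le this).false

theorem mapsTo_Ioo_of_mapsTo_Ico {g : ℝ → ℝ} {a b : ℝ} (ha : g a = a)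
    (hmaps : MapsTo g (Ico a b) (Ico a b)) (hmono : StrictMonoOn g (Ico a b)) :
    MapsTo g (Ioo a b) (Ioo a b) := fun _ hx ↦
  ⟨ha ▸ hmono (left_mem_Ico.2 (hx.1.trans hx.2)) (Ioo_subset_Ico_self hx) hx.1,
    (hmaps (Ioo_subset_Ico_self hx)).2⟩

theorem image_Ioo_eq_of_image_Ico_eq {f : ℝ → ℝ} {a b : ℝ} (hab : a < b) (ha : f a = a)
    (hinj : InjOn f (Ico a b)) (himg : f '' Ico a b = Ico a b) : f '' Ioo a b = Ioo a b := by
  rw [← Ico_sdiff_left, hinj.image_sdiff, himg, Set.inter_eq_right.2 (by simpa using hab),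
    image_singleton, ha]

theorem IsPreconnected.forall_lt_or_forall_lt_of_forall_ne {X α : Type*} [TopologicalSpace X]
    [LinearOrder α] [TopologicalSpace α] [OrderClosedTopology α] {s : Set X}
    (hs : IsPreconnected s) {f g : X → α} (hf : ContinuousOn f s) (hg : ContinuousOn g s)
    (hne : ∀ x ∈ s, f x ≠ g x) : (∀ x ∈ s, f x < g x) ∨ ∀ x ∈ s, g x < f x := by
  by_contra! h
  obtain ⟨⟨a, ha, hga⟩, ⟨b, hb, hfb⟩⟩ := h
  obtain ⟨x, hx, hfgx⟩ := hs.intermediate_value₂ hb ha hf hg hfb hga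
  exact hne x hx hfgx

theorem tendsto_iterate_of_lt_self {F : ℝ → ℝ} {a b : ℝ} (hmaps : MapsTo F (Ioo a b) (Ioo a b))
    (hcont : ContinuousOn F (Ioo a b)) (hlt : ∀ x ∈ Ioo a b, F x < x) {x : ℝ}
    (hx : x ∈ Ioo a b) : Tendsto (fun n ↦ F^[n] x) atTop (𝓝 a) := by
  have hmem : ∀ n, F^[n] x ∈ Ioo a b := fun n ↦ hmaps.iterate n hx
  have hanti := hmaps.antitone_iterate_of_map_le (fun y hy ↦ (hlt y hy).le) hx
  have hbdd : BddBelow (range fun n ↦ F^[n] x) :=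
    ⟨a, by rintro _ ⟨n, rfl⟩; exact (hmem n).1.le⟩
  have hlim := tendsto_atTop_ciInf hanti hbdd
  rcases (le_ciInf fun n ↦ (hmem n).1.le : a ≤ ⨅ n, F^[n] x).eq_or_lt with hL | hL
  · rwa [← hL] at hlim
  have hLmem : ⨅ n, F^[n] x ∈ Ioo a b := ⟨hL, (ciInf_le hbdd 0).trans_lt (hmem 0).2⟩
  -- otherwise the limit of the orbit would be a fixed point of `F` in `(a, b)`
  have hfix := isFixedPt_of_tendsto_iterate hlim
    (hcont.continuousAt (Ioo_mem_nhds hLmem.1 hLmem.2))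
  exact absurd hfix (hlt _ hLmem).ne

theorem exists_mem_Icc_of_tendsto {α : Type*} [LinearOrder α] [TopologicalSpace α]
    [OrderTopology α] {s : ℕ → α} {a : α} (hs : Tendsto s atTop (𝓝 a)) {y : α}
    (hy : y ∈ Ioc a (s 0)) : ∃ k, y ∈ Icc (s (k + 1)) (s k) := by
  have hex : ∃ k, s k < y := (hs.eventually_lt_const hy.1).exists
  obtain ⟨k, hk⟩ : ∃ k, Nat.find hex = k + 1 :=
    Nat.exists_eq_succ_of_ne_zero fun h ↦ (Nat.find_spec hex).not_ge (h ▸ hy.2)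
  refine ⟨k, (hk ▸ Nat.find_spec hex).le, not_lt.1 (Nat.find_min hex ?_)⟩
  omega

theorem hasDerivAt_iterate_of_mapsTo {𝕜 : Type*} [NontriviallyNormedField 𝕜] {f f' : 𝕜 → 𝕜}
    {s : Set 𝕜} (hs : MapsTo f s s) (hf : ∀ x ∈ s, HasDerivAt f (f' x) x) (n : ℕ) {x : 𝕜}
    (hx : x ∈ s) : HasDerivAt f^[n] (∏ i ∈ Finset.range n, f' (f^[i] x)) x := by
  induction n generalizing x with
  | zero => simpa using hasDerivAt_id x
  | succ n ih =>
    rw [Function.iterate_succ, Finset.prod_range_succ']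
    simp only [Function.iterate_succ_apply, Function.iterate_zero_apply]
    exact (ih (hs hx)).comp x (hf x hx)

theorem HasDerivAt.mul_eq_mul_of_comp_eventuallyEq {𝕜 : Type*} [NontriviallyNormedField 𝕜]
    {f g : 𝕜 → 𝕜} {x a₁ a₂ b₁ b₂ : 𝕜} (hcomm : f ∘ g =ᶠ[𝓝 x] g ∘ f)
    (hf₁ : HasDerivAt f a₁ (g x)) (hg₁ : HasDerivAt g b₁ x) (hg₂ : HasDerivAt g b₂ (f x))
    (hf₂ : HasDerivAt f a₂ x) : a₁ * b₁ = b₂ * a₂ :=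
  (hf₁.comp x hg₁).unique ((hg₂.comp x hf₂).congr_of_eventuallyEq hcomm)

theorem HasDerivAt.of_invOn {f g : ℝ → ℝ} {U V : Set ℝ} {f' y : ℝ} (hU : IsOpen U)
    (hV : IsOpen V) (hf : StrictMonoOn f U) (hbij : BijOn f U V) (hinv : InvOn g f U V)
    (hy : y ∈ V) (hd : HasDerivAt f f' (g y)) (hf' : f' ≠ 0) : HasDerivAt g f'⁻¹ y := by
  have hg := hbij.symm hinv.symm
  have hcont : ContinuousAt g y := (hf.of_invOn hinv hg.mapsTo).continuousAt_of_image_mem_nhds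
    (hV.mem_nhds hy) (hg.image_eq ▸ hU.mem_nhds (hg.mapsTo hy))
  exact hd.of_local_left_inverse hcont hf'
    (eventually_of_mem (hV.mem_nhds hy) fun z hz ↦ hinv.2 hz)

theorem tendsto_prod_comp_iterate_nhdsWithin {X M : Type*} [TopologicalSpace X]
    [TopologicalSpace M] [CommMonoid M] [ContinuousMul M] {g : X → X} {φ : X → M} {s : Set X}
    {a : X} (ha : g a = a) (hg : ContinuousWithinAt g s a) (hs : MapsTo g s s)
    (hφ : ContinuousWithinAt φ s a) (n : ℕ) :
    Tendsto (fun x ↦ ∏ i ∈ Finset.range n, φ (g^[i] x)) (𝓝[s] a) (𝓝 (φ a ^ n)) := by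
  have hiter : ∀ i, Tendsto g^[i] (𝓝[s] a) (𝓝[s] a) := by
    intro i
    induction i with
    | zero => exact tendsto_id
    | succ i ih =>
      rw [Function.iterate_succ']
      exact (ha ▸ hg.tendsto_nhdsWithin hs).comp ih
  simpa using tendsto_finsetProd (Finset.range n) fun i _ ↦ hφ.tendsto.comp (hiter i)

theorem HasDerivWithinAt.eq_one_of_tendsto_isFixedPt {g : ℝ → ℝ} {d a : ℝ} {s : Set ℝ}
    (hd : HasDerivWithinAt g d s a) (ha : g a = a) {u : ℕ → ℝ}
    (hu : Tendsto u atTop (𝓝[s \ {a}] a)) (hfix : ∀ n, g (u n) = u n) : d = 1 := by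
  have hslope := (hasDerivWithinAt_iff_tendsto_slope.1 hd).comp hu
  refine tendsto_nhds_unique hslope (tendsto_const_nhds.congr' ?_)
  filter_upwards [(tendsto_nhdsWithin_iff.1 hu).2] with n hn
  rw [Function.comp_apply, slope_def_field, hfix, ha, div_self (sub_ne_zero.2 hn.2)]

theorem eqOn_id_of_le_deriv_iterate {g : ℝ → ℝ} {D : ℕ → ℝ → ℝ} {p q c : ℝ}
    (hmaps : MapsTo g (Icc p q) (Icc p q)) (hc : 0 < c)
    (hderiv : ∀ n, ∀ x ∈ Icc p q, HasDerivAt g^[n] (D n x) x)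
    (hle : ∀ n, ∀ x ∈ Icc p q, c ≤ D n x) : EqOn g id (Icc p q) := by
  have hexp (n : ℕ) : ∀ x ∈ Icc p q, ∀ y ∈ Icc p q, x ≤ y → c * (y - x) ≤ g^[n] y - g^[n] x :=
    (convex_Icc p q).mul_sub_le_image_sub_of_le_deriv
      (fun z hz ↦ (hderiv n z hz).continuousAt.continuousWithinAt)
      (fun z hz ↦ (hderiv n z (interior_subset hz)).differentiableAt.differentiableWithinAt)
      fun z hz ↦ (hderiv n z (interior_subset hz)).deriv ▸ hle n z (interior_subset hz)
  intro u hu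
  set e := g u - u
  -- the orbit of `u` moves by at least `c |e|` at each step, always in the direction of `e`
  have hstep : ∀ n : ℕ, c * e ^ 2 ≤ (g^[n + 1] u - g^[n] u) * e := by
    intro n
    rw [Function.iterate_succ_apply]
    rcases le_total u (g u) with h | h
    · nlinarith [hexp n u hu (g u) (hmaps hu) h]
    · nlinarith [hexp n (g u) (hmaps hu) u hu h]
  have hsum : ∀ N : ℕ, N * (c * e ^ 2) ≤ (g^[N] u - u) * e := by
    intro N
    induction N with
    | zero => simp
    | succ N ih => push_cast; linear_combination ih + hstep N
  have hbound : ∀ N : ℕ, (g^[N] u - u) * e ≤ (q - p) * |e| := by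
    intro N
    have hN := hmaps.iterate N hu
    calc (g^[N] u - u) * e ≤ |g^[N] u - u| * |e| := by rw [← abs_mul]; exact le_abs_self _
      _ ≤ (q - p) * |e| := by
        gcongr
        exact abs_sub_le_iff.2 ⟨by linarith [hN.2, hu.1], by linarith [hN.1, hu.2]⟩
  by_contra hne
  have hpos : 0 < c * e ^ 2 := mul_pos hc (by have : e ≠ 0 := sub_ne_zero.2 hne; positivity)
  obtain ⟨N, hN⟩ := exists_lt_nsmul hpos ((q - p) * |e|)
  rw [nsmul_eq_mul] at hN
  linarith [hsum N, hbound N]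

theorem sum_edist_le_eVariationOn_Icc {α E : Type*} [LinearOrder α] [PseudoEMetricSpace E]
    (φ : α → E) {s : ℕ → α} (hs : Antitone s) {x y : ℕ → α}
    (hx : ∀ k, x k ∈ Icc (s (k + 1)) (s k)) (hy : ∀ k, y k ∈ Icc (s (k + 1)) (s k)) (m : ℕ) :
    ∑ k ∈ Finset.range m, edist (φ (x k)) (φ (y k)) ≤ eVariationOn φ (Icc (s m) (s 0)) := by
  induction m with
  | zero => simp
  | succ m ih =>
    have hsplit := eVariationOn.Icc_add_Icc φ (s := univ) (hs m.le_succ) (hs m.zero_le)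
      (mem_univ _)
    simp only [univ_inter] at hsplit
    rw [Finset.sum_range_succ, ← hsplit, add_comm (eVariationOn φ _)]
    exact add_le_add ih (eVariationOn.edist_le φ (hx m) (hy m))

theorem prod_le_exp_mul_prod_of_sum_abs_log_sub_le {ι : Type*} (s : Finset ι) {a b : ι → ℝ}
    {V : ℝ} (ha : ∀ i ∈ s, 0 < a i) (hb : ∀ i ∈ s, 0 < b i)
    (h : ∑ i ∈ s, |Real.log (a i) - Real.log (b i)| ≤ V) :
    ∏ i ∈ s, a i ≤ Real.exp V * ∏ i ∈ s, b i := by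
  have hexp (c : ι → ℝ) (hc : ∀ i ∈ s, 0 < c i) :
      ∏ i ∈ s, c i = Real.exp (∑ i ∈ s, Real.log (c i)) := by
    rw [Real.exp_sum]
    exact Finset.prod_congr rfl fun i hi ↦ (Real.exp_log (hc i hi)).symm
  rw [hexp a ha, hexp b hb, ← Real.exp_add, Real.exp_le_exp]
  have := (Finset.sum_le_sum fun i _ ↦ le_abs_self (Real.log (a i) - Real.log (b i))).trans h
  rw [Finset.sum_sub_distrib] at this
  linarith

namespace Kopell

theorem prod_deriv_iterate_le_exp_mul {F F' : ℝ → ℝ} {β : ℝ}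
    (hFmaps : MapsTo F (Ioo 0 1) (Ioo 0 1)) (hFmono : StrictMonoOn F (Ioo 0 1))
    (hFlt : ∀ x ∈ Ioo (0 : ℝ) 1, F x < x) (hF'pos : ∀ x ∈ Ioo (0 : ℝ) 1, 0 < F' x)
    (hbv : BoundedVariationOn (fun z ↦ Real.log (F' z)) (Ioc 0 β)) (hβ : β ∈ Ioo (0 : ℝ) 1)
    {x y : ℝ} (hx : x ∈ Icc (F β) β) (hy : y ∈ Icc (F β) β) (m : ℕ) :
    ∏ k ∈ Finset.range m, F' (F^[k] y) ≤
      Real.exp (eVariationOn (fun z ↦ Real.log (F' z)) (Ioc 0 β)).toReal *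
        ∏ k ∈ Finset.range m, F' (F^[k] x) := by
  have hI : Icc (F β) β ⊆ Ioo 0 1 := fun z hz ↦
    ⟨(hFmaps hβ).1.trans_le hz.1, hz.2.trans_lt hβ.2⟩
  have hanti := hFmaps.antitone_iterate_of_map_le (fun z hz ↦ (hFlt z hz).le) hβ
  have horbit : ∀ z ∈ Icc (F β) β, ∀ k, F^[k] z ∈ Icc (F^[k + 1] β) (F^[k] β) := by
    intro z hz k
    rw [Function.iterate_succ_apply]
    exact ⟨(hFmono.iterate hFmaps k).monotoneOn (hFmaps hβ) (hI hz) hz.1,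
      (hFmono.iterate hFmaps k).monotoneOn (hI hz) hβ hz.2⟩
  have hsub : Icc (F^[m] β) β ⊆ Ioc 0 β := fun z hz ↦
    ⟨(hFmaps.iterate m hβ).1.trans_le hz.1, hz.2⟩
  have hvar := (sum_edist_le_eVariationOn_Icc (fun z ↦ Real.log (F' z)) hanti (horbit y hy)
    (horbit x hx) m).trans (eVariationOn.mono _ hsub)
  refine prod_le_exp_mul_prod_of_sum_abs_log_sub_le _
    (fun k _ ↦ hF'pos _ (hFmaps.iterate k (hI hy))) (fun k _ ↦ hF'pos _ (hFmaps.iterate k (hI hx)))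
    (le_of_eq_of_le ?_ (ENNReal.toReal_mono hbv hvar))
  rw [ENNReal.toReal_sum fun _ _ ↦ edist_ne_top _ _]
  simp only [← dist_edist, Real.dist_eq]

theorem prod_deriv_iterate_comp_le {F F' g g' : ℝ → ℝ} {β : ℝ}
    (hFmaps : MapsTo F (Ioo 0 1) (Ioo 0 1)) (hFmono : StrictMonoOn F (Ioo 0 1))
    (hFlt : ∀ x ∈ Ioo (0 : ℝ) 1, F x < x) (hFderiv : ∀ x ∈ Ioo (0 : ℝ) 1, HasDerivAt F (F' x) x)
    (hF'pos : ∀ x ∈ Ioo (0 : ℝ) 1, 0 < F' x)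
    (hbv : BoundedVariationOn (fun z ↦ Real.log (F' z)) (Ioc 0 β))
    (hgmaps : MapsTo g (Ioo 0 1) (Ioo 0 1))
    (hgderiv : ∀ x ∈ Ioo (0 : ℝ) 1, HasDerivAt g (g' x) x)
    (hg'nonneg : ∀ x ∈ Ioo (0 : ℝ) 1, 0 ≤ g' x) (hgI : MapsTo g (Icc (F β) β) (Icc (F β) β))
    (hcomm : ∀ x ∈ Ioo (0 : ℝ) 1, F (g x) = g (F x)) (hβ : β ∈ Ioo (0 : ℝ) 1) {x : ℝ}
    (hx : x ∈ Icc (F β) β) (n m : ℕ) :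
    ∏ i ∈ Finset.range n, g' (g^[i] (F^[m] x)) ≤
      Real.exp (eVariationOn (fun z ↦ Real.log (F' z)) (Ioc 0 β)).toReal *
        ∏ i ∈ Finset.range n, g' (g^[i] x) := by
  set G : ℝ → ℝ := fun x ↦ ∏ i ∈ Finset.range n, g' (g^[i] x)
  set P : ℝ → ℝ := fun x ↦ ∏ k ∈ Finset.range m, F' (F^[k] x)
  have hx' : x ∈ Ioo 0 1 := ⟨(hFmaps hβ).1.trans_le hx.1, hx.2.trans_lt hβ.2⟩
  have hG {y} (hy : y ∈ Ioo (0 : ℝ) 1) : HasDerivAt g^[n] (G y) y :=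
    hasDerivAt_iterate_of_mapsTo hgmaps hgderiv n hy
  have hP {y} (hy : y ∈ Ioo (0 : ℝ) 1) : HasDerivAt F^[m] (P y) y :=
    hasDerivAt_iterate_of_mapsTo hFmaps hFderiv m hy
  have hchain : G (F^[m] x) * P x = P (g^[n] x) * G x :=
    HasDerivAt.mul_eq_mul_of_comp_eventuallyEq (eventually_of_mem (Ioo_mem_nhds hx'.1 hx'.2)
      fun z hz ↦ (hFmaps.iterate_comm hgmaps hcomm m n hz).symm)
      (hG (hFmaps.iterate m hx')) (hP hx') (hP (hgmaps.iterate n hx')) (hG hx')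
  have hPpos : 0 < P x := Finset.prod_pos fun k _ ↦ hF'pos _ (hFmaps.iterate k hx')
  have hGnonneg : 0 ≤ G x := Finset.prod_nonneg fun i _ ↦ hg'nonneg _ (hgmaps.iterate i hx')
  refine le_of_mul_le_mul_right ?_ hPpos
  calc G (F^[m] x) * P x = P (g^[n] x) * G x := hchain
    _ ≤ Real.exp (eVariationOn (fun z ↦ Real.log (F' z)) (Ioc 0 β)).toReal * P x * G x := by
      gcongr
      exact prod_deriv_iterate_le_exp_mul hFmaps hFmono hFlt hF'pos hbv hβ hx (hgI.iterate n hx) m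
    _ = _ := by ring

theorem eqOn_id_Icc_of_map_eq_self {F F' g g' : ℝ → ℝ} {β : ℝ}
    (hFmaps : MapsTo F (Ioo 0 1) (Ioo 0 1)) (hFmono : StrictMonoOn F (Ioo 0 1))
    (hFlt : ∀ x ∈ Ioo (0 : ℝ) 1, F x < x) (hFderiv : ∀ x ∈ Ioo (0 : ℝ) 1, HasDerivAt F (F' x) x)
    (hF'pos : ∀ x ∈ Ioo (0 : ℝ) 1, 0 < F' x)
    (hbv : BoundedVariationOn (fun z ↦ Real.log (F' z)) (Ioc 0 β))
    (hg0 : g 0 = 0) (hgmaps : MapsTo g (Ico 0 1) (Ico 0 1)) (hgmono : StrictMonoOn g (Ico 0 1))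
    (hgderiv : ∀ x ∈ Ico (0 : ℝ) 1, HasDerivWithinAt g (g' x) (Ico 0 1) x)
    (hg'pos : ∀ x ∈ Ico (0 : ℝ) 1, 0 < g' x) (hg'cont : ContinuousWithinAt g' (Ico 0 1) 0)
    (hcomm : ∀ x ∈ Ioo (0 : ℝ) 1, F (g x) = g (F x)) (hβ : β ∈ Ioo (0 : ℝ) 1) (hgβ : g β = β) :
    EqOn g id (Icc (F β) β) := by
  set V := (eVariationOn (fun z ↦ Real.log (F' z)) (Ioc 0 β)).toReal
  have h0 : (0 : ℝ) ∈ Ico 0 1 := left_mem_Ico.2 one_pos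
  have hgIoo := mapsTo_Ioo_of_mapsTo_Ico hg0 hgmaps hgmono
  have hgd : ∀ x ∈ Ioo (0 : ℝ) 1, HasDerivAt g (g' x) x := fun x hx ↦
    (hgderiv x (Ioo_subset_Ico_self hx)).hasDerivAt (Ico_mem_nhds hx.1 hx.2)
  have hI : Icc (F β) β ⊆ Ioo 0 1 := fun z hz ↦
    ⟨(hFmaps hβ).1.trans_le hz.1, hz.2.trans_lt hβ.2⟩
  have hgI : MapsTo g (Icc (F β) β) (Icc (F β) β) := by
    have hgFβ : g (F β) = F β := by rw [← hcomm β hβ, hgβ]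
    simpa only [hgFβ, hgβ] using
      (hgmono.monotoneOn.mono (hI.trans Ioo_subset_Ico_self)).mapsTo_Icc
  have horbit : ∀ x ∈ Ioo (0 : ℝ) 1, Tendsto (fun m ↦ F^[m] x) atTop (𝓝[Ico 0 1 \ {0}] 0) :=
    fun x hx ↦ tendsto_nhdsWithin_iff.2 ⟨tendsto_iterate_of_lt_self hFmaps
      (fun z hz ↦ (hFderiv z hz).continuousAt.continuousWithinAt) hFlt hx,
      Eventually.of_forall fun m ↦
        ⟨Ioo_subset_Ico_self (hFmaps.iterate m hx), (hFmaps.iterate m hx).1.ne'⟩⟩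
  -- the points `F^[m] β` are fixed by `g` and accumulate at `0`
  have hg'0 : g' 0 = 1 := (hgderiv 0 h0).eq_one_of_tendsto_isFixedPt hg0 (horbit β hβ)
    fun m ↦ by simpa [hgβ] using (hFmaps.iterate_comm hgIoo hcomm m 1 hβ).symm
  have hG : ∀ n, ∀ x ∈ Ioo (0 : ℝ) 1,
      HasDerivAt g^[n] (∏ i ∈ Finset.range n, g' (g^[i] x)) x :=
    fun n _ hx ↦ hasDerivAt_iterate_of_mapsTo hgIoo hgd n hx
  have hbound : ∀ n, ∀ x ∈ Icc (F β) β,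
      Real.exp (-V) ≤ ∏ i ∈ Finset.range n, g' (g^[i] x) := by
    intro n x hx
    have hlim := tendsto_prod_comp_iterate_nhdsWithin hg0 (hgderiv 0 h0).continuousWithinAt
      hgmaps hg'cont n
    rw [hg'0, one_pow] at hlim
    have hle := le_of_tendsto' (hlim.comp ((horbit x (hI hx)).mono_right
      (nhdsWithin_mono _ sdiff_subset))) fun m ↦ prod_deriv_iterate_comp_le hFmaps hFmono hFlt
        hFderiv hF'pos hbv hgIoo hgd (fun y hy ↦ (hg'pos y (Ioo_subset_Ico_self hy)).le) hgI
        hcomm hβ hx n m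
    calc Real.exp (-V) = Real.exp (-V) * 1 := (mul_one _).symm
      _ ≤ Real.exp (-V) * (Real.exp V * ∏ i ∈ Finset.range n, g' (g^[i] x)) :=
        mul_le_mul_of_nonneg_left hle (Real.exp_pos _).le
      _ = _ := by rw [← mul_assoc, ← Real.exp_add, neg_add_cancel, Real.exp_zero, one_mul]
  exact eqOn_id_of_le_deriv_iterate hgI (Real.exp_pos (-V)) (fun n x hx ↦ hG n x (hI hx)) hbound

theorem eqOn_id_of_lt_self {F F' g g' : ℝ → ℝ} {b : ℝ}
    (hFmaps : MapsTo F (Ioo 0 1) (Ioo 0 1)) (hFmono : StrictMonoOn F (Ioo 0 1))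
    (hFlt : ∀ x ∈ Ioo (0 : ℝ) 1, F x < x) (hFderiv : ∀ x ∈ Ioo (0 : ℝ) 1, HasDerivAt F (F' x) x)
    (hF'pos : ∀ x ∈ Ioo (0 : ℝ) 1, 0 < F' x)
    (hbv : BoundedVariationOn (fun z ↦ Real.log (F' z)) (Ioc 0 b))
    (hg0 : g 0 = 0) (hgmaps : MapsTo g (Ico 0 1) (Ico 0 1)) (hgmono : StrictMonoOn g (Ico 0 1))
    (hgderiv : ∀ x ∈ Ico (0 : ℝ) 1, HasDerivWithinAt g (g' x) (Ico 0 1) x)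
    (hg'pos : ∀ x ∈ Ico (0 : ℝ) 1, 0 < g' x) (hg'cont : ContinuousWithinAt g' (Ico 0 1) 0)
    (hcomm : ∀ x ∈ Ioo (0 : ℝ) 1, F (g x) = g (F x)) (hb : b ∈ Ioo (0 : ℝ) 1) (hgb : g b = b) :
    EqOn g id (Ioo 0 1) := by
  have hgIoo := mapsTo_Ioo_of_mapsTo_Ico hg0 hgmaps hgmono
  have hcommIt : ∀ m, ∀ x ∈ Ioo (0 : ℝ) 1, F^[m] (g x) = g (F^[m] x) := fun m x hx ↦ by
    simpa using hFmaps.iterate_comm hgIoo hcomm m 1 hx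
  have hFcont : ContinuousOn F (Ioo 0 1) := fun x hx ↦
    (hFderiv x hx).continuousAt.continuousWithinAt
  have hdom : ∀ k, EqOn g id (Icc (F^[k + 1] b) (F^[k] b)) := by
    intro k
    have hkb : F^[k] b ≤ b :=
      hFmaps.antitone_iterate_of_map_le (fun x hx ↦ (hFlt x hx).le) hb k.zero_le
    rw [Function.iterate_succ_apply']
    exact eqOn_id_Icc_of_map_eq_self hFmaps hFmono hFlt hFderiv hF'pos
      (hbv.mono (Ioc_subset_Ioc_right hkb)) hg0 hgmaps hgmono hgderiv hg'pos hg'cont hcomm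
      (hFmaps.iterate k hb) (by rw [← hcommIt k b hb, hgb])
  intro x hx
  obtain ⟨m, hm⟩ := ((tendsto_iterate_of_lt_self hFmaps hFcont hFlt hx).eventually_lt_const
    hb.1).exists
  obtain ⟨k, hk⟩ := exists_mem_Icc_of_tendsto (tendsto_iterate_of_lt_self hFmaps hFcont hFlt hb)
    (y := F^[m] x) ⟨(hFmaps.iterate m hx).1, hm.le⟩
  exact (hFmono.iterate hFmaps m).injOn (hgIoo hx) hx ((hcommIt m x hx).trans (hdom k hk))

theorem eqOn_id_of_self_lt {f f' g g' : ℝ → ℝ} {b : ℝ}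
    (hfbij : BijOn f (Ioo 0 1) (Ioo 0 1)) (hfmono : StrictMonoOn f (Ioo 0 1))
    (hfgt : ∀ x ∈ Ioo (0 : ℝ) 1, x < f x) (hfderiv : ∀ x ∈ Ioo (0 : ℝ) 1, HasDerivAt f (f' x) x)
    (hf'pos : ∀ x ∈ Ioo (0 : ℝ) 1, 0 < f' x)
    (hbv : BoundedVariationOn (fun z ↦ Real.log (f' z)) (Ioc 0 b))
    (hg0 : g 0 = 0) (hgmaps : MapsTo g (Ico 0 1) (Ico 0 1)) (hgmono : StrictMonoOn g (Ico 0 1))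
    (hgderiv : ∀ x ∈ Ico (0 : ℝ) 1, HasDerivWithinAt g (g' x) (Ico 0 1) x)
    (hg'pos : ∀ x ∈ Ico (0 : ℝ) 1, 0 < g' x) (hg'cont : ContinuousWithinAt g' (Ico 0 1) 0)
    (hcomm : ∀ x ∈ Ioo (0 : ℝ) 1, f (g x) = g (f x)) (hb : b ∈ Ioo (0 : ℝ) 1) (hgb : g b = b) :
    EqOn g id (Ioo 0 1) := by
  set F := Function.invFunOn f (Ioo 0 1)
  have hinv : InvOn F f (Ioo 0 1) (Ioo 0 1) := hfbij.invOn_invFunOn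
  have hFmaps : MapsTo F (Ioo 0 1) (Ioo 0 1) := (hfbij.symm hinv.symm).mapsTo
  have hFmono : StrictMonoOn F (Ioo 0 1) := hfmono.of_invOn hinv hFmaps
  have hFlt : ∀ y ∈ Ioo (0 : ℝ) 1, F y < y := fun y hy ↦ by
    simpa only [hinv.2 hy] using hfgt (F y) (hFmaps hy)
  have hIoc : Ioc 0 b ⊆ Ioo (0 : ℝ) 1 := Ioc_subset_Ioo_right hb.2
  have hbvF : BoundedVariationOn (fun y ↦ Real.log (f' (F y))⁻¹) (Ioc 0 b) := by
    simp only [Real.log_inv]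
    refine isometry_neg.lipschitz.comp_boundedVariationOn (ne_top_of_le_ne_top hbv ?_)
    refine eVariationOn.comp_le_of_monotoneOn _ F (hFmono.monotoneOn.mono hIoc) fun y hy ↦ ?_
    exact ⟨(hFmaps (hIoc hy)).1, (hFlt y (hIoc hy)).le.trans hy.2⟩
  have hgIoo := mapsTo_Ioo_of_mapsTo_Ico hg0 hgmaps hgmono
  refine eqOn_id_of_lt_self hFmaps hFmono hFlt
    (fun y hy ↦ HasDerivAt.of_invOn isOpen_Ioo isOpen_Ioo hfmono hfbij hinv hy
      (hfderiv _ (hFmaps hy)) (hf'pos _ (hFmaps hy)).ne')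
    (fun y hy ↦ inv_pos.2 (hf'pos _ (hFmaps hy))) hbvF hg0 hgmaps hgmono hgderiv hg'pos hg'cont
    (fun x hx ↦ hfbij.injOn (hFmaps (hgIoo hx)) (hgIoo (hFmaps hx)) ?_) hb hgb
  rw [hinv.2 (hgIoo hx), hcomm _ (hFmaps hx), hinv.2 hx]

end Kopell

theorem stmt_1_general (f g f' g' : ℝ → ℝ)
    (hf0 : f 0 = 0) (hg0 : g 0 = 0)
    (hfimg : f '' Ico 0 1 = Ico 0 1) (hgimg : g '' Ico 0 1 = Ico 0 1)
    (hfmono : StrictMonoOn f (Ico 0 1)) (hgmono : StrictMonoOn g (Ico 0 1))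
    (hfderiv : ∀ x ∈ Ico (0:ℝ) 1, HasDerivWithinAt f (f' x) (Ico 0 1) x)
    (hgderiv : ∀ x ∈ Ico (0:ℝ) 1, HasDerivWithinAt g (g' x) (Ico 0 1) x)
    (hf'pos : ∀ x ∈ Ico (0:ℝ) 1, 0 < f' x)
    (hg'pos : ∀ x ∈ Ico (0:ℝ) 1, 0 < g' x)
    (hg'cont : ContinuousOn g' (Ico 0 1))
    (hbv : ∀ c ∈ Ico (0:ℝ) 1, BoundedVariationOn (fun x => Real.log (f' x)) (Icc 0 c))
    (hcomm : ∀ x ∈ Ico (0:ℝ) 1, f (g x) = g (f x))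
    (hffix : ∀ x ∈ Ioo (0:ℝ) 1, f x ≠ x)
    (hgfix : ∃ x ∈ Ioo (0:ℝ) 1, g x = x) :
    ∀ x ∈ Ico (0:ℝ) 1, g x = x := by
  obtain ⟨b, hb, hgb⟩ := hgfix
  have hfbij : BijOn f (Ioo 0 1) (Ioo 0 1) := by
    simpa only [image_Ioo_eq_of_image_Ico_eq one_pos hf0 hfmono.injOn hfimg] using
      (hfmono.injOn.mono Ioo_subset_Ico_self).bijOn_image
  have hfmono' := hfmono.mono Ioo_subset_Ico_self
  have hfd : ∀ x ∈ Ioo (0 : ℝ) 1, HasDerivAt f (f' x) x := fun x hx ↦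
    (hfderiv x (Ioo_subset_Ico_self hx)).hasDerivAt (Ico_mem_nhds hx.1 hx.2)
  have hf'pos' : ∀ x ∈ Ioo (0 : ℝ) 1, 0 < f' x := fun x hx ↦ hf'pos x (Ioo_subset_Ico_self hx)
  have hbv' := (hbv b (Ioo_subset_Ico_self hb)).mono Ioc_subset_Icc_self
  have hgmaps : MapsTo g (Ico 0 1) (Ico 0 1) := mapsTo_iff_image_subset.2 hgimg.subset
  have hg'cont0 := hg'cont 0 (left_mem_Ico.2 one_pos)
  have hcomm' : ∀ x ∈ Ioo (0 : ℝ) 1, f (g x) = g (f x) := fun x hx ↦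
    hcomm x (Ioo_subset_Ico_self hx)
  intro x hx
  rcases hx.1.eq_or_lt with rfl | hx0
  · exact hg0
  rcases isPreconnected_Ioo.forall_lt_or_forall_lt_of_forall_ne
    (fun x hx ↦ (hfd x hx).continuousAt.continuousWithinAt) continuousOn_id hffix with hlt | hgt
  · exact Kopell.eqOn_id_of_lt_self hfbij.mapsTo hfmono' hlt hfd hf'pos' hbv' hg0 hgmaps hgmono
      hgderiv hg'pos hg'cont0 hcomm' hb hgb ⟨hx0, hx.2⟩
  · exact Kopell.eqOn_id_of_self_lt hfbij hfmono' hgt hfd hf'pos' hbv' hg0 hgmaps hgmono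
      hgderiv hg'pos hg'cont0 hcomm' hb hgb ⟨hx0, hx.2⟩

/-- Kopell's Lemma: if `f` and `g` are commuting diffeomorphisms of `[0,1)`, `f` of class
`C^{1+bv}` and `g` of class `C^1`, `f` has no fixed point in `(0,1)` and `g` has one, then
`g` is the identity. -/
theorem stmt_1 (f g f' g' : ℝ → ℝ)
    (hf0 : f 0 = 0) (hg0 : g 0 = 0)
    (hfimg : f '' Ico 0 1 = Ico 0 1) (hgimg : g '' Ico 0 1 = Ico 0 1)
    (hfmono : StrictMonoOn f (Ico 0 1)) (hgmono : StrictMonoOn g (Ico 0 1))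
    (hfderiv : ∀ x ∈ Ico (0:ℝ) 1, HasDerivWithinAt f (f' x) (Ico 0 1) x)
    (hgderiv : ∀ x ∈ Ico (0:ℝ) 1, HasDerivWithinAt g (g' x) (Ico 0 1) x)
    (hf'pos : ∀ x ∈ Ico (0:ℝ) 1, 0 < f' x)
    (hg'pos : ∀ x ∈ Ico (0:ℝ) 1, 0 < g' x)
    (hf'cont : ContinuousOn f' (Ico 0 1))
    (hg'cont : ContinuousOn g' (Ico 0 1))
    (hbv : ∀ c ∈ Ico (0:ℝ) 1, BoundedVariationOn (fun x => Real.log (f' x)) (Icc 0 c))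
    (hcomm : ∀ x ∈ Ico (0:ℝ) 1, f (g x) = g (f x))
    (hffix : ∀ x ∈ Ioo (0:ℝ) 1, f x ≠ x)
    (hgfix : ∃ x ∈ Ioo (0:ℝ) 1, g x = x) :
    ∀ x ∈ Ico (0:ℝ) 1, g x = x :=
  stmt_1_general f g f' g' hf0 hg0 hfimg hgimg hfmono hgmono hfderiv hgderiv hf'pos hg'pos hg'cont
    hbv hcomm hffix hgfix
end

section
/- Let g : [a,b] → [a,b] be a C^1 diffeomorphism fixing a and b, and suppose there exists M < ∞ such that (gʲ)'(x) ≤ exp(M) for all x ∈ [a,b] and all j ∈ ℕ. Then g is the identity on [a,b]. -/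
/-! If `g x₀ > x₀`, let `d` be the largest fixed point below `x₀`. Points of `(d, x₀]` are pushed
up, so the orbit of any `y ∈ (d, x₀]` eventually passes `x₀`: otherwise it would converge to a
fixed point in `(d, x₀]`. By the chain rule and the mean value theorem every iterate is
`exp M`-Lipschitz, so `gʲ y - d ≤ exp M (y - d)`, which is impossible for `y` close to `d`.
Conjugating by `x ↦ -x` gives the reverse inequality. -/

open Set Function Filter Topology NNReal

theorem hasDerivWithinAt_iterate_of_mapsTo {f f' : ℝ → ℝ} {s : Set ℝ} (hmaps : MapsTo f s s)
    (hf : ∀ x ∈ s, HasDerivWithinAt f (f' x) s x) (n : ℕ) {x : ℝ} (hx : x ∈ s) :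
    HasDerivWithinAt f^[n] (∏ i ∈ Finset.range n, f' (f^[i] x)) s x := by
  induction n with
  | zero => simpa using hasDerivWithinAt_id x s
  | succ n ih =>
    rw [Finset.prod_range_succ, iterate_succ', mul_comm]
    exact (hf _ (hmaps.iterate n hx)).comp x ih (hmaps.iterate n)

theorem lipschitzOnWith_iterate_of_prod_deriv_le {f f' : ℝ → ℝ} {s : Set ℝ} (hs : Convex ℝ s)
    (hmaps : MapsTo f s s) (hf : ∀ x ∈ s, HasDerivWithinAt f (f' x) s x)
    (hf' : ∀ x ∈ s, 0 ≤ f' x) {C : ℝ} {n : ℕ}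
    (hC : ∀ x ∈ s, ∏ i ∈ Finset.range n, f' (f^[i] x) ≤ C) :
    LipschitzOnWith C.toNNReal f^[n] s := by
  refine hs.lipschitzOnWith_of_nnnorm_hasDerivWithin_le
    (fun x hx => hasDerivWithinAt_iterate_of_mapsTo hmaps hf n hx) fun x hx => ?_
  have hnonneg : 0 ≤ ∏ i ∈ Finset.range n, f' (f^[i] x) :=
    Finset.prod_nonneg fun i _ => hf' _ (hmaps.iterate i hx)
  rw [Real.nnnorm_of_nonneg hnonneg, ← Real.toNNReal_of_nonneg hnonneg]
  exact Real.toNNReal_le_toNNReal (hC x hx)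

theorem exists_fixedPt_forall_lt_apply {f : ℝ → ℝ} {a x : ℝ} (hax : a ≤ x)
    (hf : ContinuousOn f (Icc a x)) (ha : f a = a) (hx : x < f x) :
    ∃ d ∈ Icc a x, f d = d ∧ ∀ z ∈ Ioc d x, z < f z := by
  have hcompact : IsCompact {z ∈ Icc a x | f z = z} :=
    isCompact_Icc.of_isClosed_subset (isClosed_Icc.isClosed_eq hf continuousOn_id)
      (sep_subset _ _)
  obtain ⟨d, ⟨hd, hfd⟩, hgreatest⟩ :=
    hcompact.exists_isGreatest ⟨a, ⟨left_mem_Icc.2 hax, ha⟩⟩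
  refine ⟨d, hd, hfd, fun z hz => ?_⟩
  by_contra! hfz
  have hzI : Icc z x ⊆ Icc a x := Icc_subset_Icc_left (hd.1.trans hz.1.le)
  obtain ⟨c, hc, hfc⟩ := intermediate_value_Icc hz.2 ((hf.mono hzI).sub continuousOn_id)
    ⟨sub_nonpos.2 hfz, sub_nonneg.2 hx.le⟩
  have hcd : c ≤ d := hgreatest ⟨hzI hc, sub_eq_zero.1 hfc⟩
  linarith [hz.1, hc.1]

theorem exists_lt_iterate_of_lt_apply {f : ℝ → ℝ} {d x y : ℝ} (hf : ContinuousOn f (Icc d x))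
    (hlt : ∀ z ∈ Ioc d x, z < f z) (hy : y ∈ Ioc d x) : ∃ n, x < f^[n] y := by
  by_contra! hle
  have horbit : ∀ n, f^[n] y ∈ Ioc d x := by
    intro n
    induction n with
    | zero => exact hy
    | succ n ih =>
      have hnext := hle (n + 1)
      rw [iterate_succ_apply'] at hnext ⊢
      exact ⟨ih.1.trans (hlt _ ih), hnext⟩
  have hmono : Monotone fun n => f^[n] y := monotone_nat_of_le_succ fun n => by
    rw [iterate_succ_apply']
    exact (hlt _ (horbit n)).le
  have hbdd : BddAbove (range fun n => f^[n] y) := ⟨x, forall_mem_range.2 fun n => (horbit n).2⟩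
  set c := ⨆ n, f^[n] y
  have hc : c ∈ Ioc d x := ⟨hy.1.trans_le (le_ciSup hbdd 0), ciSup_le fun n => (horbit n).2⟩
  have htendsto : Tendsto (fun n => f^[n] y) atTop (𝓝 c) := tendsto_atTop_ciSup hmono hbdd
  have hfc : f c = c := by
    refine tendsto_nhds_unique ?_ ((tendsto_add_atTop_iff_nat 1).2 htendsto)
    simp only [iterate_succ_apply']
    exact (hf c (Ioc_subset_Icc_self hc)).tendsto.comp <| tendsto_nhdsWithin_iff.2
      ⟨htendsto, Eventually.of_forall fun n => Ioc_subset_Icc_self (horbit n)⟩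
  exact (hlt c hc).ne' hfc

theorem apply_le_self_of_lipschitzOnWith_iterate {f : ℝ → ℝ} {a b : ℝ} {K : ℝ≥0} (ha : f a = a)
    (hK : ∀ n, LipschitzOnWith K f^[n] (Icc a b)) : ∀ x ∈ Icc a b, f x ≤ x := by
  intro x hx
  by_contra! hfx
  have hf : ContinuousOn f (Icc a b) := by simpa using (hK 1).continuousOn
  obtain ⟨d, hd, hfd, hlt⟩ :=
    exists_fixedPt_forall_lt_apply hx.1 (hf.mono (Icc_subset_Icc_right hx.2)) ha hfx
  have hdx : d < x := hd.2.lt_of_ne (by rintro rfl; exact hfx.ne' hfd)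
  have hdI : d ∈ Icc a b := ⟨hd.1, hd.2.trans hx.2⟩
  set y := d + (x - d) / (K + 1)
  have hstep : 0 < (x - d) / (K + 1) := div_pos (sub_pos.2 hdx) (by positivity)
  have hKstep : K * ((x - d) / (K + 1)) < x - d := by
    rw [mul_div_assoc', div_lt_iff₀ (by positivity)]
    nlinarith
  have hy : y ∈ Ioc d x := ⟨lt_add_of_pos_right d hstep, by
    linarith [div_le_self (sub_pos.2 hdx).le (le_add_of_nonneg_left K.2 : (1 : ℝ) ≤ K + 1)]⟩
  obtain ⟨n, hn⟩ := exists_lt_iterate_of_lt_apply (hf.mono (Icc_subset_Icc hd.1 hx.2)) hlt hy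
  have hLip := (hK n).le_add_mul ⟨hd.1.trans hy.1.le, hy.2.trans hx.2⟩ hdI
  rw [iterate_fixed hfd, Real.dist_eq, add_sub_cancel_left, abs_of_pos hstep] at hLip
  linarith

theorem self_le_apply_of_lipschitzOnWith_iterate {f : ℝ → ℝ} {a b : ℝ} {K : ℝ≥0} (hb : f b = b)
    (hK : ∀ n, LipschitzOnWith K f^[n] (Icc a b)) : ∀ x ∈ Icc a b, x ≤ f x := by
  have hconj (n : ℕ) (z : ℝ) : (fun z => -f (-z))^[n] z = -f^[n] (-z) := by
    have : Semiconj Neg.neg f fun z => -f (-z) := fun z => by simp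
    simpa using (this.iterate_right n (-z)).symm
  have hneg {z : ℝ} (hz : z ∈ Icc (-b) (-a)) : -z ∈ Icc a b := ⟨le_neg.1 hz.2, neg_le.1 hz.1⟩
  have hLip (n : ℕ) : LipschitzOnWith K (fun z => -f (-z))^[n] (Icc (-b) (-a)) :=
    LipschitzOnWith.of_dist_le_mul fun u hu v hv => by
      rw [hconj, hconj, dist_neg_neg]
      simpa using (hK n).dist_le_mul _ (hneg hu) _ (hneg hv)
  intro x hx
  simpa using apply_le_self_of_lipschitzOnWith_iterate (by simp [hb]) hLip (-x)
    ⟨neg_le_neg hx.2, neg_le_neg hx.1⟩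

theorem stmt_3_general (a b M : ℝ) (g g' : ℝ → ℝ)
    (hga : g a = a) (hgb : g b = b)
    (hmaps : MapsTo g (Icc a b) (Icc a b))
    (hderiv : ∀ x ∈ Icc a b, HasDerivWithinAt g (g' x) (Icc a b) x)
    (hpos : ∀ x ∈ Icc a b, 0 < g' x)
    (hbound : ∀ j : ℕ, ∀ x ∈ Icc a b,
      (∏ i ∈ Finset.range j, g' (g^[i] x)) ≤ Real.exp M) :
    ∀ x ∈ Icc a b, g x = x := by
  have hLip (n : ℕ) : LipschitzOnWith (Real.exp M).toNNReal g^[n] (Icc a b) :=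
    lipschitzOnWith_iterate_of_prod_deriv_le (convex_Icc a b) hmaps hderiv
      (fun x hx => (hpos x hx).le) (hbound n)
  intro x hx
  exact le_antisymm (apply_le_self_of_lipschitzOnWith_iterate hga hLip x hx)
    (self_le_apply_of_lipschitzOnWith_iterate hgb hLip x hx)

/-- A `C^1` diffeomorphism of `[a,b]` fixing the endpoints, all of whose iterates have
derivative bounded by `exp M`, is the identity. Here `(gʲ)'(x) = ∏_{i<j} g'(g^[i] x)`. -/
theorem stmt_3 (a b M : ℝ) (hab : a < b) (g g' : ℝ → ℝ)
    (hga : g a = a) (hgb : g b = b)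
    (hmono : StrictMonoOn g (Icc a b))
    (hmaps : MapsTo g (Icc a b) (Icc a b))
    (hderiv : ∀ x ∈ Icc a b, HasDerivWithinAt g (g' x) (Icc a b) x)
    (hcont : ContinuousOn g' (Icc a b))
    (hpos : ∀ x ∈ Icc a b, 0 < g' x)
    (hbound : ∀ j : ℕ, ∀ x ∈ Icc a b,
      (∏ i ∈ Finset.range j, g' (g^[i] x)) ≤ Real.exp M) :
    ∀ x ∈ Icc a b, g x = x :=
  stmt_3_general a b M g g' hga hgb hmaps hderiv hpos hbound
end

section
/- Let (ℓ_{m,n})_{m,n≥0} be nonnegative reals with Σ_{m,n} ℓ_{m,n} ≤ S < ∞, and let 1/2 < τ < 1. Then Σ_{k≥0} (1/(k+1)) Σ_{m+n=k} ℓ_{m,n}^τ ≤ S^τ · (Σ_{k≥1} k^{-τ/(1-τ)})^{1-τ}, and in particular this double sum is finite. -/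
/-!
Write `w k = 1/(k+1)`. Regrouping by antidiagonals turns the left-hand side into
`∑_{m,n} ℓ_{m,n}^τ w_{m+n}`, and Hölder's inequality on `ℕ × ℕ` with exponents `1/τ`
and `1/(1-τ)` bounds this by `(∑ ℓ_{m,n})^τ (∑_{m,n} w_{m+n}^{1/(1-τ)})^{1-τ}`.
Since the antidiagonal `m + n = k` has `k + 1` points, the last sum is
`∑_k (k+1)^{1 - 1/(1-τ)} = ∑_k (k+1)^{-τ/(1-τ)}`, a convergent `p`-series because
`τ/(1-τ) > 1` exactly when `τ > 1/2`.
-/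

open MeasureTheory ENNReal Finset

namespace ENNReal

theorem tsum_rpow_mul_le {α : Type*} {τ : ℝ} (hτ0 : 0 < τ) (hτ1 : τ < 1)
    (f g : α → ℝ≥0∞) :
    ∑' a, f a ^ τ * g a ≤ (∑' a, f a) ^ τ * (∑' a, g a ^ (1 - τ)⁻¹) ^ (1 - τ) := by
  let _ : MeasurableSpace α := ⊤
  have hpq : τ⁻¹.HolderConjugate (1 - τ)⁻¹ :=
    Real.holderConjugate_iff.mpr ⟨one_lt_inv_iff₀.mpr ⟨hτ0, hτ1⟩, by simp⟩
  have h := lintegral_mul_le_Lp_mul_Lq Measure.count hpq (f := fun a => f a ^ τ) (g := g)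
    measurable_from_top.aemeasurable measurable_from_top.aemeasurable
  simpa only [lintegral_count, Pi.mul_apply, ← rpow_mul, mul_inv_cancel₀ hτ0.ne', rpow_one,
    one_div, inv_inv] using h

theorem ofReal_rpow_le_ofReal_rpow {τ : ℝ} (hτ : 0 < τ) (x : ℝ) :
    ENNReal.ofReal x ^ τ ≤ ENNReal.ofReal (x ^ τ) := by
  rcases le_or_gt 0 x with hx | hx
  · exact (ofReal_rpow_of_nonneg hx hτ.le).le
  · rw [ofReal_of_nonpos hx.le, zero_rpow_of_pos hτ]
    exact zero_le

theorem tsum_prod_eq_tsum_sum_antidiagonal (f : ℕ × ℕ → ℝ≥0∞) :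
    ∑' p, f p = ∑' k, ∑ p ∈ antidiagonal k, f p := by
  rw [← Finset.HasAntidiagonal.sigmaAntidiagonalEquivProd.tsum_eq f, ENNReal.tsum_sigma']
  exact tsum_congr fun k => Finset.tsum_subtype (antidiagonal k) f

theorem tsum_prod_add (g : ℕ → ℝ≥0∞) :
    ∑' p : ℕ × ℕ, g (p.1 + p.2) = ∑' k, (k + 1) * g k := by
  rw [tsum_prod_eq_tsum_sum_antidiagonal]
  refine tsum_congr fun k => ?_
  rw [sum_congr rfl fun p hp => congrArg g (HasAntidiagonal.mem_antidiagonal.mp hp), sum_const,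
    Nat.card_antidiagonal, nsmul_eq_mul, Nat.cast_add_one]

theorem tsum_ofReal_natCast_add_one_rpow_neg_ne_top {r : ℝ} (hr : 1 < r) :
    ∑' k : ℕ, ENNReal.ofReal (((k : ℝ) + 1) ^ (-r)) ≠ ⊤ := by
  have hsummable : Summable fun k : ℕ => ((k : ℝ) + 1) ^ (-r) := by
    simpa only [Nat.cast_add_one] using
      (summable_nat_add_iff 1).mpr (Real.summable_nat_rpow.mpr (neg_lt_neg hr))
  rw [← ofReal_tsum_of_nonneg (fun k => by positivity) hsummable]
  exact ofReal_ne_top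

end ENNReal

theorem tsum_ofReal_mul_sum_range_rpow (ℓ : ℕ → ℕ → ℝ) (hℓ : ∀ m n, 0 ≤ ℓ m n)
    (w : ℕ → ℝ) (hw : ∀ k, 0 ≤ w k) {τ : ℝ} (hτ : 0 ≤ τ) :
    ∑' k : ℕ, ENNReal.ofReal (w k * ∑ m ∈ range (k + 1), ℓ m (k - m) ^ τ)
      = ∑' p : ℕ × ℕ,
          ENNReal.ofReal (ℓ p.1 p.2) ^ τ * ENNReal.ofReal (w (p.1 + p.2)) := by
  rw [ENNReal.tsum_prod_eq_tsum_sum_antidiagonal]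
  refine tsum_congr fun k => ?_
  calc _ = ENNReal.ofReal (∑ p ∈ antidiagonal k, ℓ p.1 p.2 ^ τ) * ENNReal.ofReal (w k) := by
        rw [Nat.sum_antidiagonal_eq_sum_range_succ fun m n => ℓ m n ^ τ, mul_comm,
          ofReal_mul' (hw k)]
    _ = _ := by
        rw [ofReal_sum_of_nonneg fun p _ => Real.rpow_nonneg (hℓ _ _) _, sum_mul]
        refine sum_congr rfl fun p hp => ?_
        rw [HasAntidiagonal.mem_antidiagonal.mp hp, ofReal_rpow_of_nonneg (hℓ _ _) hτ]

theorem tsum_prod_ofReal_inv_add_one_rpow {τ : ℝ} (hτ1 : τ < 1) :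
    ∑' p : ℕ × ℕ, ENNReal.ofReal (1 / (((p.1 + p.2 : ℕ) : ℝ) + 1)) ^ (1 - τ)⁻¹
      = ∑' k : ℕ, ENNReal.ofReal (((k : ℝ) + 1) ^ (-(τ / (1 - τ)))) := by
  rw [ENNReal.tsum_prod_add fun k => ENNReal.ofReal (1 / ((k : ℝ) + 1)) ^ (1 - τ)⁻¹]
  refine tsum_congr fun k => ?_
  have hk : (0 : ℝ) < k + 1 := by positivity
  have hcast : (k : ℝ≥0∞) + 1 = ENNReal.ofReal ((k : ℝ) + 1) := by
    exact_mod_cast (ofReal_natCast (k + 1)).symm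
  have hexp : 1 + -(1 - τ)⁻¹ = -(τ / (1 - τ)) := by
    field_simp [(sub_pos.mpr hτ1).ne']
    ring
  rw [hcast, ofReal_rpow_of_pos (by positivity), ← ofReal_mul hk.le, one_div,
    Real.inv_rpow hk.le, ← Real.rpow_neg hk.le, ← hexp, Real.rpow_add hk, Real.rpow_one]

/-- Key Hölder estimate of the generalized Denjoy theorem: for nonnegative `ℓ_{m,n}` with
`Σ ℓ_{m,n} ≤ S` and `1/2 < τ < 1`,
`Σ_k (1/(k+1)) Σ_{m+n=k} ℓ_{m,n}^τ ≤ S^τ (Σ_{k≥1} k^{-τ/(1-τ)})^{1-τ} < ∞`. -/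
theorem stmt_7 (ℓ : ℕ → ℕ → ℝ) (S τ : ℝ)
    (hpos : ∀ m n, 0 ≤ ℓ m n)
    (hτ : 1/2 < τ) (hτ1 : τ < 1)
    (hsum : ∑' p : ℕ × ℕ, ENNReal.ofReal (ℓ p.1 p.2) ≤ ENNReal.ofReal S) :
    (∑' k : ℕ, ENNReal.ofReal
        ((1 / ((k:ℝ) + 1)) * ∑ m ∈ Finset.range (k+1), ℓ m (k - m) ^ τ))
      ≤ ENNReal.ofReal (S ^ τ) *
        (∑' k : ℕ, ENNReal.ofReal (((k:ℝ) + 1) ^ (-(τ / (1 - τ))))) ^ (1 - τ) ∧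
    (∑' k : ℕ, ENNReal.ofReal
        ((1 / ((k:ℝ) + 1)) * ∑ m ∈ Finset.range (k+1), ℓ m (k - m) ^ τ)) ≠ ⊤ := by
  have hτ0 : 0 < τ := by linarith
  have hbound : (∑' k : ℕ, ENNReal.ofReal
        ((1 / ((k:ℝ) + 1)) * ∑ m ∈ Finset.range (k+1), ℓ m (k - m) ^ τ))
      ≤ ENNReal.ofReal (S ^ τ) *
        (∑' k : ℕ, ENNReal.ofReal (((k:ℝ) + 1) ^ (-(τ / (1 - τ))))) ^ (1 - τ) :=
    calc _ = ∑' p : ℕ × ℕ, ENNReal.ofReal (ℓ p.1 p.2) ^ τ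
            * ENNReal.ofReal (1 / (((p.1 + p.2 : ℕ) : ℝ) + 1)) :=
          tsum_ofReal_mul_sum_range_rpow ℓ hpos _ (fun k => by positivity) hτ0.le
      _ ≤ (∑' p : ℕ × ℕ, ENNReal.ofReal (ℓ p.1 p.2)) ^ τ
            * (∑' k : ℕ, ENNReal.ofReal (((k:ℝ) + 1) ^ (-(τ / (1 - τ))))) ^ (1 - τ) := by
          rw [← tsum_prod_ofReal_inv_add_one_rpow hτ1]
          exact ENNReal.tsum_rpow_mul_le hτ0 hτ1 _ _
      _ ≤ _ := by
          gcongr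
          exact (rpow_le_rpow hsum hτ0.le).trans (ofReal_rpow_le_ofReal_rpow hτ0 S)
  have hr : 1 < τ / (1 - τ) := by
    rw [lt_div_iff₀ (by linarith)]
    linarith
  have hseries := ENNReal.tsum_ofReal_natCast_add_one_rpow_neg_ne_top hr
  exact ⟨hbound, ne_top_of_le_ne_top
    (mul_ne_top ofReal_ne_top (rpow_ne_top_of_nonneg (by linarith) hseries)) hbound⟩
end

section
/- Let Γ be a group of C^{1+τ} circle diffeomorphisms, G ⊂ Γ a finite set, I an interval, and suppose C > 0 is such that |log g'(x) − log g'(y)| ≤ C|x−y|^τ for all g ∈ G and all x,y. Fix n ∈ ℕ and elements g_{i₁},…,g_{i_n} ∈ G, and suppose M < ∞ satisfies Σ_{k=0}^{n−1} |g_{i_k}⋯g_{i_1}(I)|^τ ≤ M (with the k=0 term equal to |I|^τ). Let I' be an interval adjacent to I with |I'| ≤ |I| such that, for all 0 ≤ k < n, |g_{i_k}⋯g_{i_1}(I')| ≤ |g_{i_k}⋯g_{i_1}(I)|. Then for all x,y ∈ I ∪ I', the distortion of h = g_{i_n}⋯g_{i_1} satisfies h'(x)/h'(y) ≤ exp(2^τ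 C M). -/
open Set

/-!
Taking logarithms, the distortion of `h` between `x` and `y` is the sum over the orbit of
`log g'(h_k x) - log g'(h_k y)`, and each term is at most `C |h_k x - h_k y| ^ τ` by the Hölder
bound. Both points lie in `h_k (I ∪ I')`, whose length is at most `2 |h_k I|`, so the sum is at
most `2 ^ τ C ∑ |h_k I| ^ τ ≤ 2 ^ τ C M`.
-/

lemma abs_sub_le_two_mul_of_mem_Icc {a b c u v : ℝ} (hu : u ∈ Icc a c) (hv : v ∈ Icc a c)
    (hcb : c - b ≤ b - a) : |u - v| ≤ 2 * (b - a) := by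
  obtain ⟨hau, huc⟩ := hu
  obtain ⟨hav, hvc⟩ := hv
  rw [abs_le]
  constructor <;> linarith

lemma abs_sub_rpow_le_two_rpow_mul {a b c u v τ : ℝ} (hτ : 0 ≤ τ) (hu : u ∈ Icc a c)
    (hv : v ∈ Icc a c) (hcb : c - b ≤ b - a) :
    |u - v| ^ τ ≤ 2 ^ τ * (b - a) ^ τ := by
  have hdist := abs_sub_le_two_mul_of_mem_Icc hu hv hcb
  have hab : 0 ≤ b - a := by linarith [abs_nonneg (u - v)]
  rw [← Real.mul_rpow zero_le_two hab]
  exact Real.rpow_le_rpow (abs_nonneg _) hdist hτ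

lemma monotone_of_succ_eq_comp {f : ℕ → ℝ → ℝ} {H : ℕ → ℝ → ℝ}
    (hf : ∀ k, Monotone (f k)) (hH0 : ∀ x, H 0 x = x) (hHs : ∀ k x, H (k + 1) x = f k (H k x)) :
    ∀ k, Monotone (H k)
  | 0 => fun a b hab => by simpa only [hH0] using hab
  | k + 1 => fun a b hab => by
    simpa only [hHs] using hf k (monotone_of_succ_eq_comp hf hH0 hHs k hab)

lemma prod_div_prod_le_exp_sum {s : Finset ℕ} {p q B : ℕ → ℝ} (hp : ∀ k ∈ s, 0 < p k)
    (hq : ∀ k ∈ s, 0 < q k) (hB : ∀ k ∈ s, Real.log (p k) - Real.log (q k) ≤ B k) :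
    (∏ k ∈ s, p k) / (∏ k ∈ s, q k) ≤ Real.exp (∑ k ∈ s, B k) := by
  rw [← Finset.prod_div_distrib, Real.exp_sum]
  refine Finset.prod_le_prod (fun k hk => (div_pos (hp k hk) (hq k hk)).le) fun k hk => ?_
  rw [← Real.log_le_iff_le_exp (div_pos (hp k hk) (hq k hk)),
    Real.log_div (hp k hk).ne' (hq k hk).ne']
  exact hB k hk

theorem stmt_10_general (τ C M : ℝ) (hτ0 : 0 < τ) (hC : 0 < C)
    (n : ℕ) (gs gs' : ℕ → ℝ → ℝ) (H : ℕ → ℝ → ℝ)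
    (x₀ x₁ x₂ : ℝ)
    (hmono : ∀ k, StrictMono (gs k))
    (hpos : ∀ k x, 0 < gs' k x)
    (hHolder : ∀ k, ∀ x y : ℝ,
      |Real.log (gs' k x) - Real.log (gs' k y)| ≤ C * |x - y| ^ τ)
    (hH0 : ∀ x, H 0 x = x)
    (hHs : ∀ k x, H (k+1) x = gs k (H k x))
    (hMsum : ∑ k ∈ Finset.range n, (H k x₁ - H k x₀) ^ τ ≤ M)
    (hI'small : ∀ k < n, H k x₂ - H k x₁ ≤ H k x₁ - H k x₀) :
    ∀ x ∈ Icc x₀ x₂, ∀ y ∈ Icc x₀ x₂,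
      (∏ k ∈ Finset.range n, gs' k (H k x)) / (∏ k ∈ Finset.range n, gs' k (H k y))
        ≤ Real.exp ((2:ℝ) ^ τ * C * M) := by
  intro x hx y hy
  have hHmono := monotone_of_succ_eq_comp (fun k => (hmono k).monotone) hH0 hHs
  have hterm : ∀ k ∈ Finset.range n, Real.log (gs' k (H k x)) - Real.log (gs' k (H k y)) ≤
      2 ^ τ * C * (H k x₁ - H k x₀) ^ τ := by
    intro k hk
    have hmem : ∀ z ∈ Icc x₀ x₂, H k z ∈ Icc (H k x₀) (H k x₂) := fun z hz =>
      ⟨hHmono k hz.1, hHmono k hz.2⟩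
    calc Real.log (gs' k (H k x)) - Real.log (gs' k (H k y))
        ≤ C * |H k x - H k y| ^ τ := (le_abs_self _).trans (hHolder k _ _)
      _ ≤ C * (2 ^ τ * (H k x₁ - H k x₀) ^ τ) := by
        gcongr
        exact abs_sub_rpow_le_two_rpow_mul hτ0.le (hmem x hx) (hmem y hy)
          (hI'small k (Finset.mem_range.mp hk))
      _ = 2 ^ τ * C * (H k x₁ - H k x₀) ^ τ := by ring
  calc (∏ k ∈ Finset.range n, gs' k (H k x)) / (∏ k ∈ Finset.range n, gs' k (H k y))
      ≤ Real.exp (∑ k ∈ Finset.range n, 2 ^ τ * C * (H k x₁ - H k x₀) ^ τ) :=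
        prod_div_prod_le_exp_sum (fun k _ => hpos k _) (fun k _ => hpos k _) hterm
    _ ≤ Real.exp (2 ^ τ * C * M) := by
      rw [← Finset.mul_sum]
      gcongr

/-- Distortion control in class `C^{1+τ}` (Lemma 2.2): if the sum of the `τ`-powers of the
lengths of the successive images of `I = [x₀,x₁]` is at most `M`, and the images of the
adjacent interval `I' = [x₁,x₂]` stay smaller than those of `I`, then the distortion of the
composition `h = g_{i_n}⋯g_{i_1}` on `I ∪ I'` is bounded by `exp(2^τ C M)`. -/
theorem stmt_10 (τ C M : ℝ) (hτ0 : 0 < τ) (hτ1 : τ < 1) (hC : 0 < C) (hM : 0 ≤ M)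
    (n : ℕ) (gs gs' : ℕ → ℝ → ℝ) (H : ℕ → ℝ → ℝ)
    (x₀ x₁ x₂ : ℝ) (hx01 : x₀ < x₁) (hx12 : x₁ < x₂)
    (hI'le : x₂ - x₁ ≤ x₁ - x₀)
    (hmono : ∀ k, StrictMono (gs k))
    (hderiv : ∀ k x, HasDerivAt (gs k) (gs' k x) x)
    (hpos : ∀ k x, 0 < gs' k x)
    (hHolder : ∀ k, ∀ x y : ℝ,
      |Real.log (gs' k x) - Real.log (gs' k y)| ≤ C * |x - y| ^ τ)
    (hH0 : ∀ x, H 0 x = x)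
    (hHs : ∀ k x, H (k+1) x = gs k (H k x))
    (hMsum : ∑ k ∈ Finset.range n, (H k x₁ - H k x₀) ^ τ ≤ M)
    (hI'small : ∀ k < n, H k x₂ - H k x₁ ≤ H k x₁ - H k x₀) :
    ∀ x ∈ Icc x₀ x₂, ∀ y ∈ Icc x₀ x₂,
      (∏ k ∈ Finset.range n, gs' k (H k x)) / (∏ k ∈ Finset.range n, gs' k (H k y))
        ≤ Real.exp ((2:ℝ) ^ τ * C * M) :=
  stmt_10_general τ C M hτ0 hC n gs gs' H x₀ x₁ x₂ hmono hpos hHolder hH0 hHs hMsum hI'small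
end

section
/- Let f, g, h be commuting C^1 diffeomorphisms of [0,1], with f and g of class C^{1+τ} where τ ≥ (√5−1)/2. Suppose there exist pairwise disjoint open intervals I_{i,j} ⊂ (0,1), (i,j) ∈ ℤ², arranged in lexicographic order, such that f(I_{i,j}) = I_{i−1,j}, g(I_{i,j}) = I_{i,j−1}, and h(I_{i,j}) = I_{i,j} for all (i,j). Then h restricted to the union of the I_{i,j} is the identity. -/
open Set Filter Topology Real

/-!
Let `I = I_{i,j}`. The intervals `f^k(I) = I_{i-k,j}` lie in the pairwise disjoint hulls
`J_{i-k}` of the columns `⋃_j I_{i-k,j}`, whose endpoints are fixed by `g`. As `g'` takes the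
value `1` on `J` and is `τ`-Hölder, `|y - g y| ≤ C_g |J|^{1+τ}` on `J`; since `g` pushes
`I_{i-k,j}` off itself, `|f^k(I)| ≤ C_g |J_{i-k}|^{1+τ}`, and `τ(1+τ) ≥ 1` gives
`∑_k |f^k(I)|^τ ≤ C_g^τ`. Hence the iterates of `f` have uniformly bounded distortion on `I`.
Differentiating `h^n ∘ f^k = f^k ∘ h^n` and letting `k → ∞`, so that `f^k y` tends to a fixed
point `p` of `h` with `h'(p) = 1`, bounds `(h^n)'` from below on `I` uniformly in `n`. A map of
`I` into itself whose iterates all have derivative `≥ c > 0` moves no point, since otherwise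
its orbits would leave `I`.
-/

theorem pos_of_golden_le {τ : ℝ} (hτ : (Real.sqrt 5 - 1) / 2 ≤ τ) : 0 < τ := by
  have : 1 < Real.sqrt 5 := by rw [Real.lt_sqrt zero_le_one]; norm_num
  linarith

theorem one_le_mul_one_add_of_golden_le {τ : ℝ} (hτ : (Real.sqrt 5 - 1) / 2 ≤ τ) :
    1 ≤ τ * (1 + τ) := by
  have h5 := Real.sq_sqrt (show (0:ℝ) ≤ 5 by norm_num)
  nlinarith [pos_of_golden_le hτ, Real.sqrt_nonneg 5]

theorem StrictMonoOn.endpoints_eq_of_image_Ioo_eq {φ : ℝ → ℝ} {a b c d : ℝ}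
    (hm : StrictMonoOn φ (Icc a b)) (hc : ContinuousOn φ (Icc a b)) (hab : a < b) (hcd : c < d)
    (himg : φ '' Ioo a b = Ioo c d) : φ a = c ∧ φ b = d := by
  have hcl : ∀ x ∈ Icc a b, φ x ∈ Icc c d := fun x hx => by
    rw [← closure_Ioo hcd.ne, ← himg]
    exact ((hc x hx).mono Ioo_subset_Icc_self).mem_closure_image (by rwa [closure_Ioo hab.ne])
  have hsub := (Ioo_subset_Ioo_iff hcd).1 (himg ▸ hm.image_Ioo_subset)
  exact ⟨le_antisymm hsub.1 (hcl a (left_mem_Icc.2 hab.le)).1,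
    le_antisymm (hcl b (right_mem_Icc.2 hab.le)).2 hsub.2⟩

theorem ContinuousWithinAt.apply_eq_self_of_tendsto {α : Type*} {l : Filter α} [l.NeBot]
    {φ : ℝ → ℝ} {s : Set ℝ} {u v : α → ℝ} {p : ℝ} (hφ : ContinuousWithinAt φ s p)
    (hs : ∀ t, u t ∈ s) (hu : Tendsto u l (𝓝 p)) (hv : Tendsto v l (𝓝 p))
    (huv : ∀ t, φ (u t) = v t) : φ p = p :=
  tendsto_nhds_unique
    ((hφ.tendsto.comp (tendsto_nhdsWithin_iff.2 ⟨hu, .of_forall hs⟩)).congr huv) hv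

theorem exists_deriv_eq_one_of_fixed_endpoints {φ φ' : ℝ → ℝ} {s : Set ℝ} {a b : ℝ} (hab : a < b)
    (hs : Icc a b ⊆ s) (hφ : ∀ x ∈ s, HasDerivWithinAt φ (φ' x) s x) (ha : φ a = a)
    (hb : φ b = b) : ∃ ξ ∈ Ioo a b, φ' ξ = 1 := by
  obtain ⟨ξ, hξ, hslope⟩ := exists_hasDerivAt_eq_slope φ φ' hab
    (fun x hx => (hφ x (hs hx)).continuousWithinAt.mono hs)
    fun x hx =>
      ((hφ x (hs (Ioo_subset_Icc_self hx))).mono hs).hasDerivAt (Icc_mem_nhds hx.1 hx.2)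
  exact ⟨ξ, hξ, by rw [hslope, ha, hb, div_self (sub_pos.2 hab).ne']⟩

theorem eq_one_of_tendsto_fixed_endpoints {α : Type*} {l : Filter α} [l.NeBot]
    {ψ ψ' : ℝ → ℝ} {s : Set ℝ} {u v : α → ℝ} {p : ℝ} (huv : ∀ t, u t < v t)
    (hs : ∀ t, Icc (u t) (v t) ⊆ s) (hψ : ∀ x ∈ s, HasDerivWithinAt ψ (ψ' x) s x)
    (hψ' : ContinuousWithinAt ψ' s p) (hu : ∀ t, ψ (u t) = u t) (hv : ∀ t, ψ (v t) = v t)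
    (hu' : Tendsto u l (𝓝 p)) (hv' : Tendsto v l (𝓝 p)) : ψ' p = 1 := by
  choose ξ hξ hξ1 using fun t =>
    exists_deriv_eq_one_of_fixed_endpoints (huv t) (hs t) hψ (hu t) (hv t)
  have hξp : Tendsto ξ l (𝓝 p) :=
    tendsto_of_tendsto_of_tendsto_of_le_of_le hu' hv' (fun t => (hξ t).1.le) fun t => (hξ t).2.le
  have hξs : Tendsto ξ l (𝓝[s] p) :=
    tendsto_nhdsWithin_iff.2 ⟨hξp, .of_forall fun t => hs t (Ioo_subset_Icc_self (hξ t))⟩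
  exact (tendsto_nhds_unique tendsto_const_nhds ((hψ'.tendsto.comp hξs).congr hξ1)).symm

theorem nonneg_of_holder {φ : ℝ → ℝ} {s : Set ℝ} {C τ x y : ℝ}
    (hH : ∀ x ∈ s, ∀ y ∈ s, |φ x - φ y| ≤ C * |x - y| ^ τ) (hx : x ∈ s) (hy : y ∈ s)
    (hxy : x ≠ y) : 0 ≤ C :=
  nonneg_of_mul_nonneg_left ((abs_nonneg _).trans (hH x hx y hy))
    (rpow_pos_of_pos (abs_sub_pos.2 hxy) τ)

theorem continuousOn_of_holder {φ : ℝ → ℝ} {s : Set ℝ} {C τ : ℝ} (hτ : 0 < τ)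
    (hH : ∀ x ∈ s, ∀ y ∈ s, |φ x - φ y| ≤ C * |x - y| ^ τ) : ContinuousOn φ s := by
  intro x hx
  have hbound : Tendsto (fun y => C * |y - x| ^ τ) (𝓝[s] x) (𝓝 0) := by
    have hcont : Continuous fun y => C * |y - x| ^ τ :=
      continuous_const.mul ((continuous_abs.comp (continuous_id.sub continuous_const)).rpow_const
        fun _ => .inr hτ.le)
    simpa [zero_rpow hτ.ne'] using (hcont.tendsto x).mono_left nhdsWithin_le_nhds
  refine tendsto_iff_norm_sub_tendsto_zero.2
    (squeeze_zero' (.of_forall fun _ => norm_nonneg _) ?_ hbound)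
  filter_upwards [self_mem_nhdsWithin] with y hy
  exact hH y hy x hx

theorem abs_sub_apply_le_of_fixed_endpoints {g g' : ℝ → ℝ} {s : Set ℝ} {A B C τ x : ℝ}
    (hAB : A < B) (hτ : 0 ≤ τ) (hs : Icc A B ⊆ s) (hg : ∀ y ∈ s, HasDerivWithinAt g (g' y) s y)
    (hH : ∀ y ∈ s, ∀ z ∈ s, |g' y - g' z| ≤ C * |y - z| ^ τ) (hA : g A = A) (hB : g B = B)
    (hx : x ∈ Icc A B) : |x - g x| ≤ C * (B - A) ^ (1 + τ) := by
  obtain ⟨ξ, hξ, hξ1⟩ := exists_deriv_eq_one_of_fixed_endpoints hAB hs hg hA hB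
  have hC : 0 ≤ C :=
    nonneg_of_holder hH (hs (left_mem_Icc.2 hAB.le)) (hs (right_mem_Icc.2 hAB.le)) hAB.ne
  have hbound : ∀ y ∈ Icc A B, ‖1 - g' y‖ ≤ C * (B - A) ^ τ := fun y hy => by
    rw [← hξ1, Real.norm_eq_abs]
    refine (hH ξ (hs (Ioo_subset_Icc_self hξ)) y (hs hy)).trans ?_
    gcongr
    exact abs_sub_le_iff.2 ⟨by linarith [hξ.2, hy.1], by linarith [hξ.1, hy.2]⟩
  have hmvt := (convex_Icc A B).norm_image_sub_le_of_norm_hasDerivWithin_le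
    (f := fun y => y - g y) (fun y hy => (hasDerivWithinAt_id y _).sub ((hg y (hs hy)).mono hs))
    hbound (left_mem_Icc.2 hAB.le) hx
  simp only [hA, sub_self, sub_zero, Real.norm_eq_abs, abs_of_nonneg (sub_nonneg.2 hx.1)] at hmvt
  calc |x - g x| ≤ C * (B - A) ^ τ * (x - A) := hmvt
    _ ≤ C * (B - A) ^ τ * (B - A) := by gcongr; exact hx.2
    _ = C * (B - A) ^ (1 + τ) := by
      rw [rpow_one_add' (by linarith) (by linarith)]; ring

theorem rpow_le_mul_of_le_mul_rpow_one_add {ℓ t C τ : ℝ} (hℓ : 0 ≤ ℓ) (ht₀ : 0 ≤ t)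
    (ht₁ : t ≤ 1) (hC : 0 ≤ C) (hτ : 0 ≤ τ) (hττ : 1 ≤ τ * (1 + τ)) (h : ℓ ≤ C * t ^ (1 + τ)) :
    ℓ ^ τ ≤ C ^ τ * t :=
  calc ℓ ^ τ ≤ (C * t ^ (1 + τ)) ^ τ := rpow_le_rpow hℓ h hτ
    _ = C ^ τ * t ^ ((1 + τ) * τ) := by rw [mul_rpow hC (rpow_nonneg ht₀ _), ← rpow_mul ht₀]
    _ ≤ C ^ τ * t := by
      gcongr
      simpa using rpow_le_rpow_of_exponent_ge' ht₀ ht₁ zero_le_one (by linarith)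

theorem sum_range_sub_le_one {u v : ℕ → ℝ} (hu : ∀ m, 0 ≤ u m) (hv : ∀ m, v m ≤ 1)
    (huv : ∀ m, v (m + 1) ≤ u m) (k : ℕ) : ∑ m ∈ Finset.range k, (v m - u m) ≤ 1 := by
  have htel : ∀ k, ∑ m ∈ Finset.range (k + 1), (v m - u m) ≤ v 0 - u k := by
    intro k
    induction k with
    | zero => simp
    | succ k ih => rw [Finset.sum_range_succ]; linarith [huv k]
  cases k with
  | zero => simp
  | succ k => linarith [htel k, hv 0, hu k]

theorem prod_le_exp_mul_prod {ι : Type*} (t : Finset ι) {u v : ι → ℝ} {m : ℝ} (hm : 0 < m)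
    (hu : ∀ i ∈ t, 0 ≤ u i) (hv : ∀ i ∈ t, m ≤ v i) :
    ∏ i ∈ t, u i ≤ exp ((∑ i ∈ t, |u i - v i|) / m) * ∏ i ∈ t, v i := by
  rw [Finset.sum_div, exp_sum, ← Finset.prod_mul_distrib]
  refine Finset.prod_le_prod hu fun i hi => ?_
  have hv₀ : 0 < v i := hm.trans_le (hv i hi)
  have hdiff : |u i - v i| ≤ v i * (|u i - v i| / m) := by
    rw [← mul_div_assoc, le_div_iff₀ hm, mul_comm]
    exact mul_le_mul_of_nonneg_right (hv i hi) (abs_nonneg _)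
  calc u i ≤ v i * (|u i - v i| / m + 1) := by linarith [le_abs_self (u i - v i)]
    _ ≤ exp (|u i - v i| / m) * v i := by
      rw [mul_comm]; exact mul_le_mul_of_nonneg_right (add_one_le_exp _) hv₀.le

theorem mapsTo_iterate_sub {α : Type*} {φ : α → α} {I : ℤ → Set α}
    (h : ∀ i, MapsTo φ (I i) (I (i - 1))) (i : ℤ) (n : ℕ) :
    MapsTo (φ^[n]) (I i) (I (i - n)) := by
  induction n with
  | zero => simpa using mapsTo_id (I i)
  | succ n ih =>
    rw [Function.iterate_succ', Nat.cast_succ, ← sub_sub]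
    exact (h _).comp ih

def iterateDeriv (φ φ' : ℝ → ℝ) (n : ℕ) (x : ℝ) : ℝ :=
  ∏ m ∈ Finset.range n, φ' (φ^[m] x)

section iterateDeriv

variable {φ φ' ψ ψ' : ℝ → ℝ} {s : Set ℝ}

theorem iterateDeriv_succ (n : ℕ) (x : ℝ) :
    iterateDeriv φ φ' (n + 1) x = φ' (φ^[n] x) * iterateDeriv φ φ' n x := by
  rw [iterateDeriv, Finset.prod_range_succ, mul_comm, iterateDeriv]

theorem iterateDeriv_pos (hs : MapsTo φ s s) (hpos : ∀ x ∈ s, 0 < φ' x) (n : ℕ) {x : ℝ}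
    (hx : x ∈ s) : 0 < iterateDeriv φ φ' n x :=
  Finset.prod_pos fun m _ => hpos _ (hs.iterate m hx)

theorem hasDerivWithinAt_iterate (hs : MapsTo φ s s)
    (hφ : ∀ x ∈ s, HasDerivWithinAt φ (φ' x) s x) (n : ℕ) {x : ℝ} (hx : x ∈ s) :
    HasDerivWithinAt (φ^[n]) (iterateDeriv φ φ' n x) s x := by
  induction n with
  | zero => simpa [iterateDeriv] using hasDerivWithinAt_id x s
  | succ n ih =>
    rw [Function.iterate_succ', iterateDeriv_succ]
    exact (hφ _ (hs.iterate n hx)).comp x ih (hs.iterate n)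

theorem tendsto_iterateDeriv {α : Type*} {l : Filter α} {u : α → ℝ} {p : ℝ}
    (hs : MapsTo φ s s) (hc : ContinuousOn φ s) (hc' : ContinuousOn φ' s) (hp : p ∈ s)
    (hφp : φ p = p) (hu : ∀ t, u t ∈ s) (hlim : Tendsto u l (𝓝 p)) (n : ℕ) :
    Tendsto (fun t => iterateDeriv φ φ' n (u t)) l (𝓝 (φ' p ^ n)) := by
  have hu' : Tendsto u l (𝓝[s] p) := tendsto_nhdsWithin_iff.2 ⟨hlim, .of_forall hu⟩
  have hfactor : ∀ m, Tendsto (fun t => φ' (φ^[m] (u t))) l (𝓝 (φ' p)) := fun m => by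
    have hcm := ((hc.iterate hs m) p hp).tendsto.comp hu'
    rw [Function.iterate_fixed hφp] at hcm
    exact (hc' p hp).tendsto.comp
      (tendsto_nhdsWithin_iff.2 ⟨hcm, .of_forall fun t => hs.iterate m (hu t)⟩)
  simpa [iterateDeriv] using tendsto_finsetProd (Finset.range n) fun m _ => hfactor m

theorem iterate_comm_of_commute_on (hφs : MapsTo φ s s) (hψs : MapsTo ψ s s)
    (hcomm : ∀ x ∈ s, φ (ψ x) = ψ (φ x)) (m n : ℕ) {x : ℝ} (hx : x ∈ s) :
    φ^[m] (ψ^[n] x) = ψ^[n] (φ^[m] x) := by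
  have hc : Function.Commute (hφs.restrict φ s s) (hψs.restrict ψ s s) :=
    fun y => Subtype.ext (hcomm y y.2)
  simpa [MapsTo.iterate_restrict] using congrArg Subtype.val (hc.iterate_iterate m n ⟨x, hx⟩)

/-- Both sides are derivatives of `ψ^[n] ∘ φ^[k] = φ^[k] ∘ ψ^[n]`. -/
theorem iterateDeriv_mul_iterateDeriv_comm (hs : UniqueDiffOn ℝ s) (hφs : MapsTo φ s s)
    (hψs : MapsTo ψ s s) (hφ : ∀ x ∈ s, HasDerivWithinAt φ (φ' x) s x)
    (hψ : ∀ x ∈ s, HasDerivWithinAt ψ (ψ' x) s x) (hcomm : ∀ x ∈ s, φ (ψ x) = ψ (φ x))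
    (n k : ℕ) {x : ℝ} (hx : x ∈ s) :
    iterateDeriv ψ ψ' n (φ^[k] x) * iterateDeriv φ φ' k x =
      iterateDeriv φ φ' k (ψ^[n] x) * iterateDeriv ψ ψ' n x := by
  have h₁ := (hasDerivWithinAt_iterate hψs hψ n (hφs.iterate k hx)).comp x
    (hasDerivWithinAt_iterate hφs hφ k hx) (hφs.iterate k)
  have h₂ := (hasDerivWithinAt_iterate hφs hφ k (hψs.iterate n hx)).comp x
    (hasDerivWithinAt_iterate hψs hψ n hx) (hψs.iterate n)
  exact (hs x hx).eq_deriv _ h₁ (h₂.congr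
    (fun y hy => (iterate_comm_of_commute_on hφs hψs hcomm k n hy).symm)
    (iterate_comm_of_commute_on hφs hψs hcomm k n hx).symm)

theorem exp_neg_le_iterateDeriv_of_commute {p M y : ℝ} (n : ℕ) (hs : UniqueDiffOn ℝ s)
    (hφs : MapsTo φ s s) (hψs : MapsTo ψ s s) (hφ : ∀ x ∈ s, HasDerivWithinAt φ (φ' x) s x)
    (hψ : ∀ x ∈ s, HasDerivWithinAt ψ (ψ' x) s x) (hcomm : ∀ x ∈ s, φ (ψ x) = ψ (φ x))
    (hφ'pos : ∀ x ∈ s, 0 < φ' x) (hψ'pos : ∀ x ∈ s, 0 < ψ' x) (hψ' : ContinuousOn ψ' s)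
    (hp : p ∈ s) (hψp : ψ p = p) (hψ'p : ψ' p = 1) (hy : y ∈ s)
    (hlim : Tendsto (fun k => φ^[k] y) atTop (𝓝 p))
    (hdist : ∀ k, iterateDeriv φ φ' k (ψ^[n] y) ≤ exp M * iterateDeriv φ φ' k y) :
    exp (-M) ≤ iterateDeriv ψ ψ' n y := by
  have hbound (k : ℕ) : iterateDeriv ψ ψ' n (φ^[k] y) ≤ exp M * iterateDeriv ψ ψ' n y := by
    refine le_of_mul_le_mul_right ?_ (iterateDeriv_pos hφs hφ'pos k hy)
    rw [iterateDeriv_mul_iterateDeriv_comm hs hφs hψs hφ hψ hcomm n k hy, mul_right_comm]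
    exact mul_le_mul_of_nonneg_right (hdist k) (iterateDeriv_pos hψs hψ'pos n hy).le
  have hlim' := tendsto_iterateDeriv hψs (fun x hx => (hψ x hx).continuousWithinAt) hψ' hp hψp
    (fun k => hφs.iterate k hy) hlim n
  rw [hψ'p, one_pow] at hlim'
  calc exp (-M) = exp (-M) * 1 := (mul_one _).symm
    _ ≤ exp (-M) * (exp M * iterateDeriv ψ ψ' n y) := by
      gcongr; exact le_of_tendsto' hlim' hbound
    _ = iterateDeriv ψ ψ' n y := by
      rw [← mul_assoc, ← exp_add, neg_add_cancel, exp_zero, one_mul]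

end iterateDeriv

theorem nonpos_of_le_sub_succ {u : ℕ → ℝ} {δ M : ℝ} (hM : ∀ n, u n ≤ M)
    (hδ : ∀ n, δ ≤ u (n + 1) - u n) : δ ≤ 0 := by
  have hlin : ∀ n : ℕ, u 0 + n * δ ≤ u n := by
    intro n
    induction n with
    | zero => simp
    | succ n ih => push_cast; linarith [hδ n]
  by_contra! hpos
  obtain ⟨n, hn⟩ := exists_nat_gt ((M - u 0) / δ)
  rw [div_lt_iff₀ hpos] at hn
  linarith [hlin n, hM n]

theorem apply_eq_self_of_le_deriv_iterate {φ : ℝ → ℝ} {D : ℕ → ℝ → ℝ} {a b c x : ℝ} (hc : 0 < c)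
    (hφ : MapsTo φ (Ioo a b) (Ioo a b))
    (hD : ∀ n, ∀ y ∈ Ioo a b, HasDerivAt (φ^[n]) (D n y) y)
    (hle : ∀ n, ∀ y ∈ Ioo a b, c ≤ D n y) (hx : x ∈ Ioo a b) : φ x = x := by
  have hgrowth (n : ℕ) :
      ∀ y ∈ Ioo a b, ∀ z ∈ Ioo a b, y ≤ z → c * (z - y) ≤ φ^[n] z - φ^[n] y := by
    refine (convex_Ioo a b).mul_sub_le_image_sub_of_le_deriv
      (fun y hy => (hD n y hy).continuousAt.continuousWithinAt) (fun y hy => ?_) fun y hy => ?_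
    all_goals rw [interior_Ioo] at hy
    exacts [(hD n y hy).differentiableAt.differentiableWithinAt,
      (hle n y hy).trans_eq (hD n y hy).deriv.symm]
  have horbit : ∀ n, φ^[n + 1] x = φ^[n] (φ x) := fun n => Function.iterate_succ_apply φ n x
  rcases le_total x (φ x) with hxφ | hφx
  · have := nonpos_of_le_sub_succ (u := fun n => φ^[n] x) (δ := c * (φ x - x)) (M := b)
      (fun n => (hφ.iterate n hx).2.le)
      fun n => by linarith [horbit n, hgrowth n x hx (φ x) (hφ hx) hxφ]
    exact le_antisymm (sub_nonpos.1 (nonpos_of_mul_nonpos_right this hc)) hxφ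
  · have := nonpos_of_le_sub_succ (u := fun n => -φ^[n] x) (δ := c * (x - φ x)) (M := -a)
      (fun n => neg_le_neg (hφ.iterate n hx).1.le)
      fun n => by linarith [horbit n, hgrowth n (φ x) (hφ hx) x hx hφx]
    exact le_antisymm hφx (sub_nonpos.1 (nonpos_of_mul_nonpos_right this hc))

structure LexIntervals (a b : ℤ → ℤ → ℝ) : Prop where
  lt : ∀ i j, a i j < b i j
  subset : ∀ i j, Ioo (a i j) (b i j) ⊆ Ioo 0 1
  le_of_lex : ∀ i j i' j', (i < i' ∨ (i = i' ∧ j < j')) → b i j ≤ a i' j'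

namespace LexIntervals

variable {a b : ℤ → ℤ → ℝ} {j : ℤ}

theorem nonneg (hI : LexIntervals a b) (i j : ℤ) : 0 ≤ a i j :=
  ((Ioo_subset_Ioo_iff (hI.lt i j)).1 (hI.subset i j)).1

theorem le_one (hI : LexIntervals a b) (i j : ℤ) : b i j ≤ 1 :=
  ((Ioo_subset_Ioo_iff (hI.lt i j)).1 (hI.subset i j)).2

theorem Icc_subset (hI : LexIntervals a b) (i j : ℤ) : Icc (a i j) (b i j) ⊆ Icc 0 1 :=
  Icc_subset_Icc (hI.nonneg i j) (hI.le_one i j)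

theorem endpoints_eq (hI : LexIntervals a b) {φ : ℝ → ℝ} (hm : StrictMonoOn φ (Icc 0 1))
    (hc : ContinuousOn φ (Icc 0 1)) {i j i' j' : ℤ}
    (himg : φ '' Ioo (a i j) (b i j) = Ioo (a i' j') (b i' j')) :
    φ (a i j) = a i' j' ∧ φ (b i j) = b i' j' :=
  (hm.mono (hI.Icc_subset i j)).endpoints_eq_of_image_Ioo_eq (hc.mono (hI.Icc_subset i j))
    (hI.lt i j) (hI.lt i' j') himg

theorem monotone_left (hI : LexIntervals a b) (i : ℤ) : Monotone (a i) :=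
  monotone_int_of_le_succ fun j =>
    (hI.lt i j).le.trans (hI.le_of_lex _ _ _ _ (.inr ⟨rfl, lt_add_one j⟩))

theorem monotone_right (hI : LexIntervals a b) (i : ℤ) : Monotone (b i) :=
  monotone_int_of_le_succ fun j =>
    (hI.le_of_lex _ _ _ _ (.inr ⟨rfl, lt_add_one j⟩)).trans (hI.lt i (j + 1)).le

theorem monotone_left_fst (hI : LexIntervals a b) (j : ℤ) : Monotone (a · j) :=
  monotone_int_of_le_succ fun i =>
    (hI.lt i j).le.trans (hI.le_of_lex _ _ _ _ (.inl (lt_add_one i)))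

theorem bddBelow_left (hI : LexIntervals a b) (i : ℤ) : BddBelow (range (a i)) :=
  ⟨0, by rintro _ ⟨j, rfl⟩; exact hI.nonneg i j⟩

theorem bddAbove_right (hI : LexIntervals a b) (i : ℤ) : BddAbove (range (b i)) :=
  ⟨1, by rintro _ ⟨j, rfl⟩; exact hI.le_one i j⟩

theorem bddBelow_left_fst (hI : LexIntervals a b) (j : ℤ) : BddBelow (range (a · j)) :=
  ⟨0, by rintro _ ⟨i, rfl⟩; exact hI.nonneg i j⟩

theorem iInf_left_nonneg (hI : LexIntervals a b) (i : ℤ) : 0 ≤ ⨅ j, a i j :=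
  le_ciInf (hI.nonneg i)

theorem iSup_right_le_one (hI : LexIntervals a b) (i : ℤ) : ⨆ j, b i j ≤ 1 :=
  ciSup_le (hI.le_one i)

theorem iInf_left_lt_iSup_right (hI : LexIntervals a b) (i : ℤ) : ⨅ j, a i j < ⨆ j, b i j :=
  (ciInf_le (hI.bddBelow_left i) 0).trans_lt
    ((hI.lt i 0).trans_le (le_ciSup (hI.bddAbove_right i) 0))

theorem iSup_right_le_iInf_left (hI : LexIntervals a b) {i i' : ℤ} (h : i < i') :
    ⨆ j, b i j ≤ ⨅ j, a i' j :=
  ciSup_le fun j => le_ciInf fun j' => hI.le_of_lex i j i' j' (.inl h)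

theorem Icc_subset_hull (hI : LexIntervals a b) (i j : ℤ) :
    Icc (a i j) (b i j) ⊆ Icc (⨅ j, a i j) (⨆ j, b i j) :=
  Icc_subset_Icc (ciInf_le (hI.bddBelow_left i) j) (le_ciSup (hI.bddAbove_right i) j)

theorem hull_subset (hI : LexIntervals a b) (i : ℤ) :
    Icc (⨅ j, a i j) (⨆ j, b i j) ⊆ Icc 0 1 :=
  Icc_subset_Icc (hI.iInf_left_nonneg i) (hI.iSup_right_le_one i)

theorem apply_iInf_left (hI : LexIntervals a b) {φ : ℝ → ℝ} (hc : ContinuousOn φ (Icc 0 1))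
    {i : ℤ} (hφ : ∀ j, φ (a i j) = a i (j - 1)) : φ (⨅ j, a i j) = ⨅ j, a i j := by
  have hlim := tendsto_atBot_ciInf (hI.monotone_left i) (hI.bddBelow_left i)
  have hmem := hI.hull_subset i (left_mem_Icc.2 (hI.iInf_left_lt_iSup_right i).le)
  exact (hc _ hmem).apply_eq_self_of_tendsto
    (fun j => hI.Icc_subset i j (left_mem_Icc.2 (hI.lt i j).le)) hlim
    (hlim.comp (tendsto_atBot_add_const_right _ (-1) tendsto_id))
    fun j => (hφ j).trans (congrArg (a i) (sub_eq_add_neg j 1))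

theorem apply_iSup_right (hI : LexIntervals a b) {φ : ℝ → ℝ} (hc : ContinuousOn φ (Icc 0 1))
    {i : ℤ} (hφ : ∀ j, φ (b i j) = b i (j - 1)) : φ (⨆ j, b i j) = ⨆ j, b i j := by
  have hlim := tendsto_atTop_ciSup (hI.monotone_right i) (hI.bddAbove_right i)
  have hmem := hI.hull_subset i (right_mem_Icc.2 (hI.iInf_left_lt_iSup_right i).le)
  exact (hc _ hmem).apply_eq_self_of_tendsto
    (fun j => hI.Icc_subset i j (right_mem_Icc.2 (hI.lt i j).le)) hlim
    (hlim.comp (tendsto_atTop_add_const_right _ (-1) tendsto_id))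
    fun j => (hφ j).trans (congrArg (b i) (sub_eq_add_neg j 1))

theorem sub_le_mul_rpow (hI : LexIntervals a b) {g g' : ℝ → ℝ} {C τ : ℝ} (hτ : 0 ≤ τ)
    (hg : ∀ x ∈ Icc 0 1, HasDerivWithinAt g (g' x) (Icc 0 1) x)
    (hH : ∀ x ∈ Icc (0:ℝ) 1, ∀ y ∈ Icc (0:ℝ) 1, |g' x - g' y| ≤ C * |x - y| ^ τ)
    (hm : StrictMonoOn g (Icc 0 1)) {i : ℤ}
    (hgI : ∀ j, g '' Ioo (a i j) (b i j) = Ioo (a i (j - 1)) (b i (j - 1))) (j : ℤ) :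
    b i j - a i j ≤ C * ((⨆ j, b i j) - ⨅ j, a i j) ^ (1 + τ) := by
  have hc : ContinuousOn g (Icc 0 1) := fun x hx => (hg x hx).continuousWithinAt
  have hA := hI.apply_iInf_left hc fun j => (hI.endpoints_eq hm hc (hgI j)).1
  have hB := hI.apply_iSup_right hc fun j => (hI.endpoints_eq hm hc (hgI j)).2
  suffices ∀ x ∈ Ioo (a i j) (b i j), x ≤ a i j + C * ((⨆ j, b i j) - ⨅ j, a i j) ^ (1 + τ) by
    linarith [csSup_Ioo (hI.lt i j) ▸ csSup_le (nonempty_Ioo.2 (hI.lt i j)) this]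
  intro x hx
  have hgx : g x ≤ a i j := by
    have : g x ∈ Ioo (a i (j - 1)) (b i (j - 1)) := hgI j ▸ mem_image_of_mem g hx
    exact this.2.le.trans (hI.le_of_lex _ _ _ _ (.inr ⟨rfl, sub_one_lt j⟩))
  have := abs_sub_apply_le_of_fixed_endpoints (hI.iInf_left_lt_iSup_right i) hτ
    (hI.hull_subset i) hg hH hA hB (hI.Icc_subset_hull i j (Ioo_subset_Icc_self hx))
  linarith [le_abs_self (x - g x)]

theorem sum_sub_rpow_le (hI : LexIntervals a b) {C τ : ℝ} (hτ : 0 ≤ τ)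
    (hττ : 1 ≤ τ * (1 + τ))
    (hlen : ∀ i, b i j - a i j ≤ C * ((⨆ j, b i j) - ⨅ j, a i j) ^ (1 + τ)) (i : ℤ) (k : ℕ) :
    ∑ m ∈ Finset.range k, (b (i - m) j - a (i - m) j) ^ τ ≤ C ^ τ := by
  have hC : 0 ≤ C := nonneg_of_mul_nonneg_left ((sub_nonneg.2 (hI.lt 0 j).le).trans (hlen 0))
    (rpow_pos_of_pos (sub_pos.2 (hI.iInf_left_lt_iSup_right 0)) _)
  calc ∑ m ∈ Finset.range k, (b (i - m) j - a (i - m) j) ^ τ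
      ≤ ∑ m ∈ Finset.range k, C ^ τ * ((⨆ j, b (i - m) j) - ⨅ j, a (i - m) j) :=
        Finset.sum_le_sum fun m _ => rpow_le_mul_of_le_mul_rpow_one_add
          (sub_nonneg.2 (hI.lt _ _).le) (sub_nonneg.2 (hI.iInf_left_lt_iSup_right _).le)
          (by linarith [hI.iInf_left_nonneg (i - m), hI.iSup_right_le_one (i - m)])
          hC hτ hττ (hlen _)
    _ = C ^ τ * ∑ m ∈ Finset.range k, ((⨆ j, b (i - m) j) - ⨅ j, a (i - m) j) :=
        (Finset.mul_sum _ _ _).symm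
    _ ≤ C ^ τ * 1 := by
        gcongr
        exact sum_range_sub_le_one (fun m => hI.iInf_left_nonneg _)
          (fun m => hI.iSup_right_le_one _)
          (fun m => hI.iSup_right_le_iInf_left (by push_cast; omega)) k
    _ = C ^ τ := mul_one _

theorem tendsto_left_fst (hI : LexIntervals a b) (j : ℤ) :
    Tendsto (a · j) atBot (𝓝 (⨅ i, a i j)) :=
  tendsto_atBot_ciInf (hI.monotone_left_fst j) (hI.bddBelow_left_fst j)

theorem tendsto_right_fst (hI : LexIntervals a b) (j : ℤ) :
    Tendsto (b · j) atBot (𝓝 (⨅ i, a i j)) :=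
  tendsto_of_tendsto_of_tendsto_of_le_of_le (hI.tendsto_left_fst j)
    ((hI.tendsto_left_fst j).comp (tendsto_atBot_add_const_right _ 1 tendsto_id))
    (fun i => (hI.lt i j).le) fun i => hI.le_of_lex _ _ _ _ (.inl (lt_add_one i))

theorem iInf_left_fst_mem (hI : LexIntervals a b) (j : ℤ) : ⨅ i, a i j ∈ Icc 0 1 :=
  ⟨le_ciInf fun i => hI.nonneg i j,
    ((ciInf_le (hI.bddBelow_left_fst j) 0).trans (hI.lt 0 j).le).trans (hI.le_one 0 j)⟩

theorem apply_iInf_left_fst (hI : LexIntervals a b) {φ : ℝ → ℝ}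
    (hc : ContinuousOn φ (Icc 0 1)) (hφ : ∀ i, φ (a i j) = a i j) :
    φ (⨅ i, a i j) = ⨅ i, a i j :=
  (hc _ (hI.iInf_left_fst_mem j)).apply_eq_self_of_tendsto
    (fun i => hI.Icc_subset i j (left_mem_Icc.2 (hI.lt i j).le)) (hI.tendsto_left_fst j)
    (hI.tendsto_left_fst j) hφ

theorem tendsto_iterate (hI : LexIntervals a b) {f : ℝ → ℝ}
    (hf : ∀ i, MapsTo f (Ioo (a i j) (b i j)) (Ioo (a (i - 1) j) (b (i - 1) j)))
    {i : ℤ} {y : ℝ} (hy : y ∈ Ioo (a i j) (b i j)) :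
    Tendsto (fun n => f^[n] y) atTop (𝓝 (⨅ i, a i j)) := by
  have horb := mapsTo_iterate_sub (I := fun i => Ioo (a i j) (b i j)) hf i
  have hshift : Tendsto (fun n : ℕ => i - n) atTop atBot := by
    simpa [sub_eq_add_neg] using tendsto_atBot_add_const_left atTop i
      (tendsto_neg_atTop_atBot.comp tendsto_natCast_atTop_atTop)
  exact tendsto_of_tendsto_of_tendsto_of_le_of_le ((hI.tendsto_left_fst j).comp hshift)
    ((hI.tendsto_right_fst j).comp hshift) (fun n => (horb n hy).1.le) fun n => (horb n hy).2.le

theorem iterateDeriv_le_exp_mul (hI : LexIntervals a b) {f f' : ℝ → ℝ} {m C τ L : ℝ} {i : ℤ}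
    (hf : ∀ i, MapsTo f (Ioo (a i j) (b i j)) (Ioo (a (i - 1) j) (b (i - 1) j)))
    (hm : 0 < m) (hf' : ∀ x ∈ Icc (0:ℝ) 1, m ≤ f' x) (hτ : 0 ≤ τ)
    (hH : ∀ x ∈ Icc (0:ℝ) 1, ∀ y ∈ Icc (0:ℝ) 1, |f' x - f' y| ≤ C * |x - y| ^ τ)
    (hsum : ∀ k : ℕ, ∑ n ∈ Finset.range k, (b (i - n) j - a (i - n) j) ^ τ ≤ L)
    {y z : ℝ} (hy : y ∈ Ioo (a i j) (b i j)) (hz : z ∈ Ioo (a i j) (b i j)) (k : ℕ) :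
    iterateDeriv f f' k y ≤ exp (C * L / m) * iterateDeriv f f' k z := by
  have hC := nonneg_of_holder hH (left_mem_Icc.2 zero_le_one) (right_mem_Icc.2 zero_le_one)
    zero_ne_one
  have horb := mapsTo_iterate_sub (I := fun i => Ioo (a i j) (b i j)) hf i
  have hmem (n : ℕ) {x : ℝ} (hx : x ∈ Ioo (a i j) (b i j)) : f^[n] x ∈ Icc 0 1 :=
    hI.Icc_subset _ j (Ioo_subset_Icc_self (horb n hx))
  unfold iterateDeriv
  refine (prod_le_exp_mul_prod _ hm (fun n _ => hm.le.trans (hf' _ (hmem n hy)))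
    fun n _ => hf' _ (hmem n hz)).trans ?_
  refine mul_le_mul_of_nonneg_right (exp_le_exp.2 (div_le_div_of_nonneg_right ?_ hm.le))
    (Finset.prod_nonneg fun n _ => hm.le.trans (hf' _ (hmem n hz)))
  calc ∑ n ∈ Finset.range k, |f' (f^[n] y) - f' (f^[n] z)|
      ≤ ∑ n ∈ Finset.range k, C * (b (i - n) j - a (i - n) j) ^ τ :=
        Finset.sum_le_sum fun n _ => (hH _ (hmem n hy) _ (hmem n hz)).trans <| by
          gcongr
          exact abs_sub_le_iff.2 ⟨by linarith [(horb n hy).2, (horb n hz).1],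
            by linarith [(horb n hy).1, (horb n hz).2]⟩
    _ ≤ C * L := by rw [← Finset.mul_sum]; exact mul_le_mul_of_nonneg_left (hsum k) hC

end LexIntervals

theorem stmt_12_general (τ : ℝ) (hτ : (Real.sqrt 5 - 1) / 2 ≤ τ)
    (f g h f' g' h' : ℝ → ℝ) (Cf Cg : ℝ)
    (hfimg : f '' Icc 0 1 = Icc 0 1)
    (hhimg : h '' Icc 0 1 = Icc 0 1)
    (hgmono : StrictMonoOn g (Icc 0 1))
    (hhmono : StrictMonoOn h (Icc 0 1))
    (hfderiv : ∀ x ∈ Icc (0:ℝ) 1, HasDerivWithinAt f (f' x) (Icc 0 1) x)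
    (hgderiv : ∀ x ∈ Icc (0:ℝ) 1, HasDerivWithinAt g (g' x) (Icc 0 1) x)
    (hhderiv : ∀ x ∈ Icc (0:ℝ) 1, HasDerivWithinAt h (h' x) (Icc 0 1) x)
    (hf'pos : ∀ x ∈ Icc (0:ℝ) 1, 0 < f' x)
    (hh'pos : ∀ x ∈ Icc (0:ℝ) 1, 0 < h' x)
    (hh'cont : ContinuousOn h' (Icc 0 1))
    (hfHolder : ∀ x ∈ Icc (0:ℝ) 1, ∀ y ∈ Icc (0:ℝ) 1, |f' x - f' y| ≤ Cf * |x - y| ^ τ)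
    (hgHolder : ∀ x ∈ Icc (0:ℝ) 1, ∀ y ∈ Icc (0:ℝ) 1, |g' x - g' y| ≤ Cg * |x - y| ^ τ)
    (hcommfh : ∀ x ∈ Icc (0:ℝ) 1, f (h x) = h (f x))
    -- the intervals I_{i,j} = (ia i j, ib i j)
    (ia ib : ℤ → ℤ → ℝ)
    (hlt : ∀ i j, ia i j < ib i j)
    (hsub : ∀ i j, Ioo (ia i j) (ib i j) ⊆ Ioo (0:ℝ) 1)
    -- lexicographic arrangement (hence pairwise disjointness)
    (hlex : ∀ i j i' j' : ℤ, (i < i' ∨ (i = i' ∧ j < j')) → ib i j ≤ ia i' j')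
    (hfI : ∀ i j, f '' Ioo (ia i j) (ib i j) = Ioo (ia (i-1) j) (ib (i-1) j))
    (hgI : ∀ i j, g '' Ioo (ia i j) (ib i j) = Ioo (ia i (j-1)) (ib i (j-1)))
    (hhI : ∀ i j, h '' Ioo (ia i j) (ib i j) = Ioo (ia i j) (ib i j)) :
    ∀ i j : ℤ, ∀ x ∈ Ioo (ia i j) (ib i j), h x = x := by
  intro i j x hx
  have hI : LexIntervals ia ib := ⟨hlt, hsub, hlex⟩
  have hτ₀ : 0 < τ := pos_of_golden_le hτ
  have hfs : MapsTo f (Icc 0 1) (Icc 0 1) := (mapsTo_image f _).mono_right hfimg.le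
  have hhs : MapsTo h (Icc 0 1) (Icc 0 1) := (mapsTo_image h _).mono_right hhimg.le
  have hhc : ContinuousOn h (Icc 0 1) := fun y hy => (hhderiv y hy).continuousWithinAt
  have hfI' (i : ℤ) := (mapsTo_image f _).mono_right (hfI i j).le
  have hhI' := (mapsTo_image h _).mono_right (hhI i j).le
  obtain ⟨x₀, hx₀, hmin⟩ := isCompact_Icc.exists_isMinOn (nonempty_Icc.2 zero_le_one)
    (continuousOn_of_holder hτ₀ hfHolder)
  have hsum := hI.sum_sub_rpow_le hτ₀.le (one_le_mul_one_add_of_golden_le hτ)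
    (fun i' => hI.sub_le_mul_rpow hτ₀.le hgderiv hgHolder hgmono (hgI i') j) i
  have hdist {y z : ℝ} (hy : y ∈ Ioo (ia i j) (ib i j)) (hz : z ∈ Ioo (ia i j) (ib i j)) (k : ℕ) :=
    hI.iterateDeriv_le_exp_mul hfI' (hf'pos x₀ hx₀) (isMinOn_iff.1 hmin) hτ₀.le hfHolder hsum
      hy hz k
  have hhend (i : ℤ) := hI.endpoints_eq hhmono hhc (hhI i j)
  have hp := hI.iInf_left_fst_mem j
  have hhp := hI.apply_iInf_left_fst hhc fun i => (hhend i).1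
  have hh'p := eq_one_of_tendsto_fixed_endpoints (fun i => hlt i j) (fun i => hI.Icc_subset i j)
    hhderiv (hh'cont _ hp) (fun i => (hhend i).1) (fun i => (hhend i).2)
    (hI.tendsto_left_fst j) (hI.tendsto_right_fst j)
  refine apply_eq_self_of_le_deriv_iterate (D := iterateDeriv h h')
    (exp_pos (-(Cf * Cg ^ τ / f' x₀))) hhI' (fun n y hy => ?_) (fun n y hy => ?_) hx
  · exact (hasDerivWithinAt_iterate hhs hhderiv n (Ioo_subset_Icc_self (hsub i j hy))).hasDerivAt
      (Icc_mem_nhds (hsub i j hy).1 (hsub i j hy).2)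
  · exact exp_neg_le_iterateDeriv_of_commute n (uniqueDiffOn_Icc zero_lt_one) hfs hhs hfderiv
      hhderiv hcommfh hf'pos hh'pos hh'cont hp hhp hh'p (hI.Icc_subset i j (Ioo_subset_Icc_self hy))
      (hI.tendsto_iterate hfI' hy) fun k => hdist (hhI'.iterate n hy) hy k

/-- Proposition 1.3: if `f, g, h` are commuting `C^1` diffeomorphisms of `[0,1]`, with
`f` and `g` of class `C^{1+τ}` for `τ ≥ (√5-1)/2`, and there are pairwise disjoint open
intervals `I_{i,j} ⊂ (0,1)` in lexicographic order with `f(I_{i,j}) = I_{i-1,j}`,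
`g(I_{i,j}) = I_{i,j-1}`, `h(I_{i,j}) = I_{i,j}`, then `h` is the identity on `⋃ I_{i,j}`. -/
theorem stmt_12 (τ : ℝ) (hτ : (Real.sqrt 5 - 1) / 2 ≤ τ) (hτ1 : τ < 1)
    (f g h f' g' h' : ℝ → ℝ) (Cf Cg : ℝ)
    (hf0 : f 0 = 0) (hf1 : f 1 = 1) (hg0 : g 0 = 0) (hg1 : g 1 = 1)
    (hh0 : h 0 = 0) (hh1 : h 1 = 1)
    (hfimg : f '' Icc 0 1 = Icc 0 1) (hgimg : g '' Icc 0 1 = Icc 0 1)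
    (hhimg : h '' Icc 0 1 = Icc 0 1)
    (hfmono : StrictMonoOn f (Icc 0 1)) (hgmono : StrictMonoOn g (Icc 0 1))
    (hhmono : StrictMonoOn h (Icc 0 1))
    (hfderiv : ∀ x ∈ Icc (0:ℝ) 1, HasDerivWithinAt f (f' x) (Icc 0 1) x)
    (hgderiv : ∀ x ∈ Icc (0:ℝ) 1, HasDerivWithinAt g (g' x) (Icc 0 1) x)
    (hhderiv : ∀ x ∈ Icc (0:ℝ) 1, HasDerivWithinAt h (h' x) (Icc 0 1) x)
    (hf'pos : ∀ x ∈ Icc (0:ℝ) 1, 0 < f' x)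
    (hg'pos : ∀ x ∈ Icc (0:ℝ) 1, 0 < g' x)
    (hh'pos : ∀ x ∈ Icc (0:ℝ) 1, 0 < h' x)
    (hh'cont : ContinuousOn h' (Icc 0 1))
    (hfHolder : ∀ x ∈ Icc (0:ℝ) 1, ∀ y ∈ Icc (0:ℝ) 1, |f' x - f' y| ≤ Cf * |x - y| ^ τ)
    (hgHolder : ∀ x ∈ Icc (0:ℝ) 1, ∀ y ∈ Icc (0:ℝ) 1, |g' x - g' y| ≤ Cg * |x - y| ^ τ)
    (hcommfg : ∀ x ∈ Icc (0:ℝ) 1, f (g x) = g (f x))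
    (hcommfh : ∀ x ∈ Icc (0:ℝ) 1, f (h x) = h (f x))
    (hcommgh : ∀ x ∈ Icc (0:ℝ) 1, g (h x) = h (g x))
    -- the intervals I_{i,j} = (ia i j, ib i j)
    (ia ib : ℤ → ℤ → ℝ)
    (hlt : ∀ i j, ia i j < ib i j)
    (hsub : ∀ i j, Ioo (ia i j) (ib i j) ⊆ Ioo (0:ℝ) 1)
    -- lexicographic arrangement (hence pairwise disjointness)
    (hlex : ∀ i j i' j' : ℤ, (i < i' ∨ (i = i' ∧ j < j')) → ib i j ≤ ia i' j')
    (hfI : ∀ i j, f '' Ioo (ia i j) (ib i j) = Ioo (ia (i-1) j) (ib (i-1) j))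
    (hgI : ∀ i j, g '' Ioo (ia i j) (ib i j) = Ioo (ia i (j-1)) (ib i (j-1)))
    (hhI : ∀ i j, h '' Ioo (ia i j) (ib i j) = Ioo (ia i j) (ib i j)) :
    ∀ i j : ℤ, ∀ x ∈ Ioo (ia i j) (ib i j), h x = x :=
  stmt_12_general τ hτ f g h f' g' h' Cf Cg hfimg hhimg hgmono hhmono hfderiv hgderiv hhderiv hf'pos
    hh'pos hh'cont hfHolder hgHolder hcommfh ia ib hlt hsub hlex hfI hgI hhI
end

section
/- Let Γ be a countable group of circle homeomorphisms and μ a nondegenerate probability measure on Γ. If there exists ε₀ > 0 and an element h ∈ Γ such that for every g ∈ Γ one can find an element f ∈ Γ (a product of at most 2l elements of a fixed finite subset G of supp(μ), each of μ-mass at least ρ > 0) and an interval I of length ≤ ε₀ with (g f)(ν)(I) ≥ 1−ε₀, then for ℙ = μ^ℕ-almost every sequence ω = (g₁,g₂,…), it is not the case that g₁⋯g_{n+m}(ν)(I) < 1−ε₀ for all m ≥ 0 and all intervals I of length ≤ ε₀. (Quantitatively: the probability that the first n+2lt random compositions all fail the concentration condition is at most (1−ρ^{2l})ᵗ.) -/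
/-!
Cut the times after `n` into blocks of length `L = 2l`. Whatever the walk did before a block,
with probability at least `ρ^L` the block spells out a padding of the word correcting the current
position, and then the walk concentrates at some time inside the block. Hence the `μ`-mass of the
words of length `n + L t` whose compositions never concentrate at a time in `[n, n + L t]` is at
most `(1 - ρ^L)^t`, which tends to `0`.
-/

open MeasureTheory ENNReal ProbabilityTheory

noncomputable instance {α : Type*} [TopologicalSpace α] : Group (α ≃ₜ α) where
  mul f g := g.trans f
  one := Homeomorph.refl α
  inv := Homeomorph.symm
  mul_assoc f g h := Homeomorph.ext fun _ => rfl
  one_mul f := Homeomorph.ext fun _ => rfl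
  mul_one f := Homeomorph.ext fun _ => rfl
  inv_mul_cancel f := Homeomorph.ext fun x => f.symm_apply_apply x

/-- Left-to-right composition `h̄_n(ω) = g₁ ⋯ g_n` of a random sequence. -/
def randComp {Ω G : Type*} [Group G] (X : ℕ → Ω → G) (n : ℕ) (ω : Ω) : G :=
  ((List.range n).map fun i => X i ω).prod

section Words

variable {H : Type*} (μ : H → ℝ≥0∞)

noncomputable def wordWeight {N : ℕ} (γ : Fin N → H) : ℝ≥0∞ := ∏ i, μ (γ i)

lemma tsum_eq_tsum_append {M L : ℕ} (f : (Fin (M + L) → H) → ℝ≥0∞) :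
    ∑' γ, f γ = ∑' (γ : Fin M → H) (δ : Fin L → H), f (Fin.append γ δ) := by
  rw [← (Fin.appendEquiv M L).tsum_eq, ENNReal.tsum_prod']
  rfl

lemma wordWeight_append {M L : ℕ} (γ : Fin M → H) (δ : Fin L → H) :
    wordWeight μ (Fin.append γ δ) = wordWeight μ γ * wordWeight μ δ := by
  simp [wordWeight, Fin.prod_univ_add]

lemma tsum_wordWeight : ∀ N : ℕ, ∑' γ : Fin N → H, wordWeight μ γ = (∑' g, μ g) ^ N
  | 0 => by simp [wordWeight]
  | N + 1 => by
    simp_rw [tsum_eq_tsum_append, wordWeight_append, ENNReal.tsum_mul_left, ENNReal.tsum_mul_right,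
      tsum_wordWeight N, pow_succ]
    congr 1
    rw [← (Equiv.funUnique (Fin 1) H).symm.tsum_eq]
    simp [wordWeight]

lemma tsum_indicator_compl_singleton_wordWeight (hμ : ∑' g, μ g = 1) {N : ℕ} (δ₀ : Fin N → H) :
    ∑' δ, ({δ₀}ᶜ : Set (Fin N → H)).indicator (wordWeight μ) δ = 1 - wordWeight μ δ₀ := by
  have h := ENNReal.tsum_eq_add_tsum_ite (f := wordWeight μ) δ₀
  rw [tsum_wordWeight, hμ, one_pow] at h
  refine ENNReal.eq_sub_of_add_eq (ne_top_of_le_ne_top one_ne_top ?_) ?_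
  · exact h ▸ le_self_add
  · rw [add_comm, h]
    congr 2 with δ
    by_cases hδ : δ = δ₀ <;> simp [hδ]

variable {μ} [Monoid H] (C : H → Prop) (n : ℕ)

def Avoids {N : ℕ} (γ : Fin N → H) : Prop :=
  ∀ m, n ≤ m → m ≤ N → ¬ C ((List.ofFn γ).take m).prod

variable {C n}

lemma Avoids.of_append {M L : ℕ} {γ : Fin M → H} {δ : Fin L → H}
    (h : Avoids C n (Fin.append γ δ)) : Avoids C n γ := fun m hn hm => by
  have := h m hn (by omega)
  rwa [List.ofFn_fin_append, List.take_append_of_le_length (by simpa)] at this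

lemma not_avoids_append {M L k : ℕ} {γ : Fin M → H} {δ : Fin L → H} (hn : n ≤ M) (hk : k ≤ L)
    (hC : C ((List.ofFn γ).prod * ((List.ofFn δ).take k).prod)) :
    ¬ Avoids C n (Fin.append γ δ) := fun h =>
  h (M + k) (by omega) (by omega) <| by
    simpa [List.ofFn_fin_append, List.take_append, List.take_of_length_le] using hC

variable (μ C n)

noncomputable def avoidMass (N : ℕ) : ℝ≥0∞ :=
  ∑' γ : Fin N → H, {γ | Avoids C n γ}.indicator (wordWeight μ) γ

variable {μ C n}

lemma avoidMass_add_le (hμ : ∑' g, μ g = 1) {L : ℕ} {ρ : ℝ≥0∞}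
    (hcorr : ∀ g, ∃ δ : Fin L → H, ρ ^ L ≤ wordWeight μ δ ∧
      ∃ k ≤ L, C (g * ((List.ofFn δ).take k).prod))
    {M : ℕ} (hM : n ≤ M) : avoidMass μ C n (M + L) ≤ avoidMass μ C n M * (1 - ρ ^ L) := by
  rw [avoidMass, tsum_eq_tsum_append, avoidMass, ← ENNReal.tsum_mul_right]
  refine ENNReal.tsum_le_tsum fun γ => ?_
  by_cases hγ : Avoids C n γ
  · obtain ⟨δ₀, hδ₀, k, hk, hC⟩ := hcorr (List.ofFn γ).prod
    calc ∑' δ, {γ | Avoids C n γ}.indicator (wordWeight μ) (Fin.append γ δ)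
        ≤ ∑' δ, wordWeight μ γ * ({δ₀}ᶜ : Set (Fin L → H)).indicator (wordWeight μ) δ := by
          refine ENNReal.tsum_le_tsum fun δ => ?_
          by_cases hδ : δ = δ₀
          · rw [Set.indicator_of_notMem (by subst hδ; exact not_avoids_append hM hk hC)]
            exact zero_le
          · rw [Set.indicator_of_mem (show δ ∈ ({δ₀}ᶜ : Set _) from hδ), ← wordWeight_append]
            exact Set.indicator_le_self _ _ _
      _ = wordWeight μ γ * (1 - wordWeight μ δ₀) := by
          rw [ENNReal.tsum_mul_left, tsum_indicator_compl_singleton_wordWeight μ hμ]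
      _ ≤ {γ | Avoids C n γ}.indicator (wordWeight μ) γ * (1 - ρ ^ L) := by
          rw [Set.indicator_of_mem hγ]
          gcongr
  · simp only [Set.indicator_of_notMem (show γ ∉ {γ | Avoids C n γ} from hγ), zero_mul,
      nonpos_iff_eq_zero, ENNReal.tsum_eq_zero]
    exact fun δ => Set.indicator_of_notMem (fun h => hγ h.of_append) _

lemma avoidMass_le_pow (hμ : ∑' g, μ g = 1) {L : ℕ} {ρ : ℝ≥0∞}
    (hcorr : ∀ g, ∃ δ : Fin L → H, ρ ^ L ≤ wordWeight μ δ ∧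
      ∃ k ≤ L, C (g * ((List.ofFn δ).take k).prod)) :
    ∀ t : ℕ, avoidMass μ C n (n + L * t) ≤ (1 - ρ ^ L) ^ t
  | 0 => calc
      avoidMass μ C n (n + L * 0) ≤ ∑' γ : Fin (n + L * 0) → H, wordWeight μ γ :=
        ENNReal.tsum_le_tsum fun γ => Set.indicator_le_self _ _ _
      _ = (1 - ρ ^ L) ^ 0 := by rw [tsum_wordWeight, hμ, one_pow, pow_zero]
  | t + 1 => calc
      avoidMass μ C n (n + L * (t + 1)) = avoidMass μ C n (n + L * t + L) := by ring_nf
      _ ≤ avoidMass μ C n (n + L * t) * (1 - ρ ^ L) := avoidMass_add_le hμ hcorr (by omega)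
      _ ≤ (1 - ρ ^ L) ^ (t + 1) := by
        rw [pow_succ]
        gcongr
        exact avoidMass_le_pow hμ hcorr t

end Words

lemma measure_word_mem_le {H Ω : Type*} [Countable H] [MeasurableSpace Ω] {P : Measure Ω}
    {μ : H → ℝ≥0∞} {X : ℕ → Ω → H} {N : ℕ}
    (hX : ∀ γ : Fin N → H, P {ω | ∀ i : Fin N, X i ω = γ i} = wordWeight μ γ)
    (S : Set (Fin N → H)) :
    P {ω | (fun i : Fin N => X i ω) ∈ S} ≤ ∑' γ, S.indicator (wordWeight μ) γ := calc
  P {ω | (fun i : Fin N => X i ω) ∈ S} ≤ P (⋃ γ : S, {ω | ∀ i : Fin N, X i ω = γ.1 i}) :=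
    measure_mono fun ω hω => Set.mem_iUnion.mpr ⟨⟨_, hω⟩, fun _ => rfl⟩
  _ ≤ ∑' γ : S, P {ω | ∀ i : Fin N, X i ω = γ.1 i} := measure_iUnion_le _
  _ = ∑' γ, S.indicator (wordWeight μ) γ := by
    simp_rw [hX]
    exact tsum_subtype S (wordWeight μ)

lemma randComp_eq_prod_take_ofFn {Ω H : Type*} [Group H] (X : ℕ → Ω → H) (ω : Ω) {m N : ℕ}
    (hm : m ≤ N) : randComp X m ω = ((List.ofFn fun i : Fin N => X i ω).take m).prod := by
  have h : List.ofFn (fun i : Fin N => X i ω) = (List.range N).map (X · ω) :=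
    List.ext_getElem (by simp) fun i _ _ => by simp
  rw [h, ← List.map_take, List.take_range, min_eq_left hm, randComp]

lemma exists_padded_word {H : Type*} [Monoid H] {μ : H → ℝ≥0∞} {C : H → Prop} {G : Finset H}
    {g₀ : H} (hg₀ : g₀ ∈ G) {ρ : ℝ≥0∞} (hGρ : ∀ f ∈ G, ρ ≤ μ f) {L : ℕ}
    (hmain : ∀ g : H, ∃ k, k ≤ L ∧ ∃ w : Fin k → H, (∀ i, w i ∈ G) ∧
      C (g * (List.ofFn w).prod)) (g : H) :
    ∃ δ : Fin L → H, ρ ^ L ≤ wordWeight μ δ ∧ ∃ k ≤ L, C (g * ((List.ofFn δ).take k).prod) := by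
  obtain ⟨k, hk, w, hwG, hC⟩ := hmain g
  set δ : Fin L → H := fun j => if h : (j : ℕ) < k then w ⟨j, h⟩ else g₀
  have hδG : ∀ j, δ j ∈ G := fun j => by
    by_cases h : (j : ℕ) < k <;> simp [δ, h, hwG, hg₀]
  have hδw : (List.ofFn δ).take k = List.ofFn w :=
    List.ext_getElem (by simpa using hk) fun i h₁ _ => by
      simp at h₁
      simp [δ, h₁]
  refine ⟨δ, ?_, k, hk, hδw ▸ hC⟩
  simpa [wordWeight] using Finset.pow_card_le_prod Finset.univ (fun j => μ (δ j)) ρ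
    fun j _ => hGρ _ (hδG j)

section RandomWalk

variable {Ω H : Type*} [MeasurableSpace Ω] [Group H] [Countable H] {P : Measure Ω}
  {μ : H → ℝ≥0∞} {X : ℕ → Ω → H} {C : H → Prop} {L : ℕ} {ρ : ℝ≥0∞}

theorem ae_exists_randComp_of_padded (hμ : ∑' g, μ g = 1)
    (hX : ∀ N (γ : Fin N → H), P {ω | ∀ i : Fin N, X i ω = γ i} = ∏ i, μ (γ i))
    (hρ : 0 < ρ)
    (hcorr : ∀ g, ∃ δ : Fin L → H, ρ ^ L ≤ wordWeight μ δ ∧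
      ∃ k ≤ L, C (g * ((List.ofFn δ).take k).prod))
    (n : ℕ) : ∀ᵐ ω ∂P, ∃ m, C (randComp X (n + m) ω) := by
  have hlim : Filter.Tendsto (fun t : ℕ => (1 - ρ ^ L) ^ t) Filter.atTop (nhds 0) :=
    ENNReal.tendsto_pow_atTop_nhds_zero_of_lt_one
      (ENNReal.sub_lt_self one_ne_top one_ne_zero (pow_ne_zero L hρ.ne'))
  rw [ae_iff]
  refine le_antisymm (ge_of_tendsto' hlim fun t => ?_) zero_le
  calc P {ω | ¬ ∃ m, C (randComp X (n + m) ω)}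
      ≤ P {ω | (fun i : Fin (n + L * t) => X i ω) ∈ {γ | Avoids C n γ}} :=
        measure_mono fun ω hω m hn hm => by
          obtain ⟨m, rfl⟩ := Nat.exists_eq_add_of_le hn
          rw [← randComp_eq_prod_take_ofFn X ω hm]
          exact fun h => hω ⟨m, h⟩
    _ ≤ avoidMass μ C n (n + L * t) := measure_word_mem_le (hX _) _
    _ ≤ (1 - ρ ^ L) ^ t := avoidMass_le_pow hμ hcorr t

theorem ae_exists_randComp_of_words (hμ : ∑' g, μ g = 1)
    (hX : ∀ N (γ : Fin N → H), P {ω | ∀ i : Fin N, X i ω = γ i} = ∏ i, μ (γ i))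
    {G : Finset H} (hρ : 0 < ρ) (hGρ : ∀ f ∈ G, ρ ≤ μ f)
    (hmain : ∀ g : H, ∃ k, k ≤ L ∧ ∃ w : Fin k → H, (∀ i, w i ∈ G) ∧
      C (g * (List.ofFn w).prod))
    (n : ℕ) : ∀ᵐ ω ∂P, ∃ m, C (randComp X (n + m) ω) := by
  rcases G.eq_empty_or_nonempty with rfl | ⟨g₀, hg₀⟩
  · refine Filter.Eventually.of_forall fun ω => ⟨0, ?_⟩
    obtain ⟨_ | k, -, w, hw, hC⟩ := hmain (randComp X (n + 0) ω)
    · simpa using hC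
    · exact absurd (hw 0) (Finset.notMem_empty _)
  · exact ae_exists_randComp_of_padded hμ hX hρ (exists_padded_word hg₀ hGρ hmain) n

end RandomWalk

theorem stmt_14_general {Ω : Type*} [MeasureSpace Ω]
    (Γ : Subgroup (AddCircle (1:ℝ) ≃ₜ AddCircle (1:ℝ))) [Countable Γ]
    (μ : Γ → ℝ≥0∞) (hμ1 : ∑' g : Γ, μ g = 1)
    (X : ℕ → Ω → Γ)
    -- (X i) is an i.i.d. sequence with common law μ
    (hiid : ∀ n : ℕ, ∀ γ : Fin n → Γ,
      ℙ {ω : Ω | ∀ i : Fin n, X i ω = γ i} = ∏ i : Fin n, μ (γ i))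
    (ν : Measure (AddCircle (1:ℝ)))
    (ε₀ : ℝ)
    (G : Finset Γ) (l : ℕ) (ρ : ℝ≥0∞) (hρ : 0 < ρ)
    (hGρ : ∀ f ∈ G, ρ ≤ μ f)
    (hmain : ∀ g : Γ, ∃ k, k ≤ 2 * l ∧ ∃ w : Fin k → Γ, (∀ i, w i ∈ G) ∧
      ∃ a b : ℝ, b - a ≤ ε₀ ∧
        ENNReal.ofReal (1 - ε₀) ≤
          Measure.map
            (⇑((↑(g * (List.ofFn w).prod) : AddCircle (1:ℝ) ≃ₜ AddCircle (1:ℝ)))) ν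
            ((fun x : ℝ => (x : AddCircle (1:ℝ))) '' Set.Icc a b))
    (n : ℕ) :
    ∀ᵐ ω ∂(ℙ : Measure Ω), ∃ m : ℕ, ∃ a b : ℝ, b - a ≤ ε₀ ∧
      ENNReal.ofReal (1 - ε₀) ≤
        Measure.map
          (⇑((↑(randComp X (n + m) ω) : AddCircle (1:ℝ) ≃ₜ AddCircle (1:ℝ)))) ν
          ((fun x : ℝ => (x : AddCircle (1:ℝ))) '' Set.Icc a b) :=
  ae_exists_randComp_of_words (C := fun g : Γ => ∃ a b : ℝ, b - a ≤ ε₀ ∧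
      ENNReal.ofReal (1 - ε₀) ≤ Measure.map (⇑(g : AddCircle (1:ℝ) ≃ₜ AddCircle (1:ℝ))) ν
        ((fun x : ℝ => (x : AddCircle (1:ℝ))) '' Set.Icc a b))
    hμ1 hiid hρ hGρ hmain n

/-- The Borel–Cantelli estimate at the heart of Antonov's contraction theorem: if every
`g ∈ Γ` can be corrected by a bounded word `f` in the support of `μ` so that `(g f)(ν)`
concentrates mass `≥ 1-ε₀` on an interval of length `≤ ε₀`, then almost surely the random
left compositions `g₁⋯g_{n+m}(ν)` concentrate at some time `m`. -/
theorem stmt_14 {Ω : Type*} [MeasureSpace Ω] [IsProbabilityMeasure (ℙ : Measure Ω)]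
    (Γ : Subgroup (AddCircle (1:ℝ) ≃ₜ AddCircle (1:ℝ))) [Countable Γ]
    (μ : Γ → ℝ≥0∞) (hμ1 : ∑' g : Γ, μ g = 1)
    (hnd : Submonoid.closure {g : Γ | μ g ≠ 0} = ⊤)
    (X : ℕ → Ω → Γ)
    -- (X i) is an i.i.d. sequence with common law μ
    (hiid : ∀ n : ℕ, ∀ γ : Fin n → Γ,
      ℙ {ω : Ω | ∀ i : Fin n, X i ω = γ i} = ∏ i : Fin n, μ (γ i))
    (ν : Measure (AddCircle (1:ℝ))) [IsProbabilityMeasure ν]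
    (ε₀ : ℝ) (hε₀ : 0 < ε₀)
    (G : Finset Γ) (l : ℕ) (ρ : ℝ≥0∞) (hρ : 0 < ρ)
    (hGρ : ∀ f ∈ G, ρ ≤ μ f)
    (hmain : ∀ g : Γ, ∃ k, k ≤ 2 * l ∧ ∃ w : Fin k → Γ, (∀ i, w i ∈ G) ∧
      ∃ a b : ℝ, b - a ≤ ε₀ ∧
        ENNReal.ofReal (1 - ε₀) ≤
          Measure.map
            (⇑((↑(g * (List.ofFn w).prod) : AddCircle (1:ℝ) ≃ₜ AddCircle (1:ℝ)))) ν
            ((fun x : ℝ => (x : AddCircle (1:ℝ))) '' Set.Icc a b))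
    (n : ℕ) :
    ∀ᵐ ω ∂(ℙ : Measure Ω), ∃ m : ℕ, ∃ a b : ℝ, b - a ≤ ε₀ ∧
      ENNReal.ofReal (1 - ε₀) ≤
        Measure.map
          (⇑((↑(randComp X (n + m) ω) : AddCircle (1:ℝ) ≃ₜ AddCircle (1:ℝ)))) ν
          ((fun x : ℝ => (x : AddCircle (1:ℝ))) '' Set.Icc a b) :=
  stmt_14_general Γ μ hμ1 X hiid ν ε₀ G l ρ hρ hGρ hmain n
end

section
/- Let f : [a,d] → [a,d] and the compositions setting of the spring configuration: let (g_i)_{i≥1} be maps each equal to f or g (C^1 diffeomorphisms of a compact interval), ε ∈ (0,1/3), ε₁ > 0 such that whenever |y−z| ≤ ε₁ one has f'(y)/f'(z) ≤ (2−2ε)/(2−3ε) and g'(y)/g'(z) ≤ (2−2ε)/(2−3ε). Suppose C ≥ 1 and x ∈ [a,d] satisfy (g_n⋯g₁)'(x) ≤ C/(2−2ε)ⁿ for all n ≥ 0. Then for every y ∈ [a,d] with |y−x| ≤ ε₁/C and every n ≥ 0, (g_n⋯g₁)'(y) ≤ C/(2−3ε)ⁿ. -/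
/-!
Along the orbit of `x` the derivative of the `n`-fold composition is `∏ k < n, ds k (H k x)`.
By strong induction on `n`, the bound `C / (2 - 3ε)ᵏ` for all `k < n` on the ball of radius
`ε₁ / C` around `x` gives, by the mean value theorem, `|H k y - H k x| ≤ ε₁ / (2 - 3ε)ᵏ`,
which is at most `ε₁`.
So each factor at `y` is at most `(2 - 2ε) / (2 - 3ε)` times the factor at `x`, and the
product over `k < n` is at most `((2 - 2ε) / (2 - 3ε))ⁿ · C / (2 - 2ε)ⁿ = C / (2 - 3ε)ⁿ`.
-/

open Set

theorem Finset.prod_le_pow_card_mul_prod {ι R : Type*} [CommSemiring R] [PartialOrder R]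
    [IsOrderedRing R] {t : Finset ι} {u v : ι → R} {r : R}
    (hu : ∀ i ∈ t, 0 ≤ u i) (huv : ∀ i ∈ t, u i ≤ r * v i) :
    ∏ i ∈ t, u i ≤ r ^ t.card * ∏ i ∈ t, v i := by
  rw [← Finset.prod_const, ← Finset.prod_mul_distrib]
  exact Finset.prod_le_prod hu huv

theorem abs_sub_le_of_abs_deriv_le {s : Set ℝ} (hs : Convex ℝ s) {φ φ' : ℝ → ℝ}
    {x z ρ L : ℝ}
    (hφ : ∀ w ∈ s, HasDerivWithinAt φ (φ' w) s w)
    (hbound : ∀ w ∈ s, |w - x| ≤ ρ → |φ' w| ≤ L)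
    (hx : x ∈ s) (hz : z ∈ s) (hzx : |z - x| ≤ ρ) :
    |φ z - φ x| ≤ L * ρ := by
  have hρ : 0 ≤ ρ := (abs_nonneg _).trans hzx
  have hL : 0 ≤ L := (abs_nonneg _).trans (hbound x hx (by simpa using hρ))
  have hball : Convex ℝ (s ∩ Metric.closedBall x ρ) := hs.inter (convex_closedBall x ρ)
  have hmvt := hball.norm_image_sub_le_of_norm_hasDerivWithin_le
    (fun w hw => (hφ w hw.1).mono inter_subset_left)
    (fun w hw => hbound w hw.1 (Metric.mem_closedBall.1 hw.2))
    ⟨hx, Metric.mem_closedBall_self hρ⟩ ⟨hz, Metric.mem_closedBall.2 hzx⟩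
  simp only [Real.norm_eq_abs] at hmvt
  exact hmvt.trans (mul_le_mul_of_nonneg_left hzx hL)

section Orbit

variable {gs ds H : ℕ → ℝ → ℝ} {s : Set ℝ}

theorem mapsTo_orbit (hH0 : ∀ x, H 0 x = x) (hHs : ∀ n x, H (n + 1) x = gs n (H n x))
    (hmaps : ∀ n, MapsTo (gs n) s s) (n : ℕ) : MapsTo (H n) s s := by
  induction n with
  | zero => intro z hz; rwa [hH0]
  | succ n ih => intro z hz; rw [hHs]; exact hmaps n (ih hz)

theorem hasDerivWithinAt_orbit (hH0 : ∀ x, H 0 x = x)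
    (hHs : ∀ n x, H (n + 1) x = gs n (H n x)) (hmaps : ∀ n, MapsTo (gs n) s s)
    (hderiv : ∀ n, ∀ z ∈ s, HasDerivWithinAt (gs n) (ds n z) s z) (n : ℕ) {z : ℝ}
    (hz : z ∈ s) : HasDerivWithinAt (H n) (∏ k ∈ Finset.range n, ds k (H k z)) s z := by
  induction n with
  | zero =>
    rw [show H 0 = id from funext hH0]
    simpa using hasDerivWithinAt_id z s
  | succ n ih =>
    rw [show H (n + 1) = gs n ∘ H n from funext (hHs n), Finset.prod_range_succ, mul_comm]
    exact (hderiv n _ (mapsTo_orbit hH0 hHs hmaps n hz)).comp z ih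
      (mapsTo_orbit hH0 hHs hmaps n)

theorem prod_orbit_le_div_pow_of_ratio_le {x ε₁ C p q : ℝ} (hs : Convex ℝ s)
    (hH0 : ∀ x, H 0 x = x) (hHs : ∀ n x, H (n + 1) x = gs n (H n x))
    (hmaps : ∀ n, MapsTo (gs n) s s)
    (hderiv : ∀ n, ∀ z ∈ s, HasDerivWithinAt (gs n) (ds n z) s z)
    (hds_nonneg : ∀ k, ∀ u ∈ s, 0 ≤ ds k u)
    (hds_ratio : ∀ k, ∀ u ∈ s, ∀ v ∈ s, |u - v| ≤ ε₁ → ds k u ≤ p / q * ds k v)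
    (hp : 0 < p) (hq : 1 ≤ q) (hC : 0 < C) (hε₁ : 0 ≤ ε₁) (hx : x ∈ s)
    (hhyp : ∀ n, ∏ k ∈ Finset.range n, ds k (H k x) ≤ C / p ^ n) (n : ℕ) :
    ∀ z ∈ s, |z - x| ≤ ε₁ / C →
      ∏ k ∈ Finset.range n, ds k (H k z) ≤ C / q ^ n := by
  induction n using Nat.strong_induction_on with
  | _ n ih =>
  intro z hz hzx
  have hq0 : 0 < q := by linarith
  have hHz : ∀ k, H k z ∈ s := fun k => mapsTo_orbit hH0 hHs hmaps k hz
  have hHx : ∀ k, H k x ∈ s := fun k => mapsTo_orbit hH0 hHs hmaps k hx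
  have hclose : ∀ k < n, |H k z - H k x| ≤ ε₁ := fun k hk => by
    calc |H k z - H k x|
        ≤ C / q ^ k * (ε₁ / C) := by
          refine abs_sub_le_of_abs_deriv_le hs (fun w hw => hasDerivWithinAt_orbit hH0 hHs hmaps
            hderiv k hw) (fun w hw hwx => ?_) hx hz hzx
          rw [abs_of_nonneg (Finset.prod_nonneg fun j _ =>
            hds_nonneg j _ (mapsTo_orbit hH0 hHs hmaps j hw))]
          exact ih k hk w hw hwx
      _ = ε₁ / q ^ k := by field_simp
      _ ≤ ε₁ := div_le_self hε₁ (one_le_pow₀ hq)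
  calc ∏ k ∈ Finset.range n, ds k (H k z)
      ≤ (p / q) ^ n * ∏ k ∈ Finset.range n, ds k (H k x) := by
        simpa using Finset.prod_le_pow_card_mul_prod (fun k _ => hds_nonneg k _ (hHz k))
          fun k hk => hds_ratio k _ (hHz k) _ (hHx k) (hclose k (Finset.mem_range.1 hk))
    _ ≤ (p / q) ^ n * (C / p ^ n) := by gcongr; exact hhyp n
    _ = C / q ^ n := by rw [div_pow]; field_simp

end Orbit

theorem stmt_18_general (a d ε ε₁ C : ℝ)
    (hε3 : ε < 1/3) (hε₁ : 0 < ε₁) (hC : 1 ≤ C)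
    (f g f' g' : ℝ → ℝ)
    (hfmaps : MapsTo f (Icc a d) (Icc a d))
    (hgmaps : MapsTo g (Icc a d) (Icc a d))
    (hfderiv : ∀ x ∈ Icc a d, HasDerivWithinAt f (f' x) (Icc a d) x)
    (hgderiv : ∀ x ∈ Icc a d, HasDerivWithinAt g (g' x) (Icc a d) x)
    (hf'pos : ∀ x ∈ Icc a d, 0 < f' x)
    (hg'pos : ∀ x ∈ Icc a d, 0 < g' x)
    -- modulus of continuity at scale ε₁
    (hmodf : ∀ y ∈ Icc a d, ∀ z ∈ Icc a d, |y - z| ≤ ε₁ →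
      f' y / f' z ≤ (2 - 2*ε) / (2 - 3*ε))
    (hmodg : ∀ y ∈ Icc a d, ∀ z ∈ Icc a d, |y - z| ≤ ε₁ →
      g' y / g' z ≤ (2 - 2*ε) / (2 - 3*ε))
    -- each gs i is f or g, with ds i its derivative
    (gs ds : ℕ → ℝ → ℝ)
    (hgs : ∀ i, (gs i = f ∧ ds i = f') ∨ (gs i = g ∧ ds i = g'))
    -- H n = gs (n-1) ∘ ⋯ ∘ gs 0
    (H : ℕ → ℝ → ℝ)
    (hH0 : ∀ x, H 0 x = x)
    (hHs : ∀ n x, H (n+1) x = gs n (H n x))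
    (x : ℝ) (hx : x ∈ Icc a d)
    (hhyp : ∀ n : ℕ, (∏ k ∈ Finset.range n, ds k (H k x)) ≤ C / (2 - 2*ε)^n) :
    ∀ y ∈ Icc a d, |y - x| ≤ ε₁ / C →
      ∀ n : ℕ, (∏ k ∈ Finset.range n, ds k (H k y)) ≤ C / (2 - 3*ε)^n := by
  have hmaps : ∀ k, MapsTo (gs k) (Icc a d) (Icc a d) := fun k => by
    obtain ⟨h, -⟩ | ⟨h, -⟩ := hgs k <;> rw [h] <;> assumption
  have hderiv : ∀ k, ∀ z ∈ Icc a d, HasDerivWithinAt (gs k) (ds k z) (Icc a d) z :=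
      fun k => by
    obtain ⟨h, h'⟩ | ⟨h, h'⟩ := hgs k <;> rw [h, h'] <;> assumption
  have hpos : ∀ k, ∀ u ∈ Icc a d, 0 < ds k u := fun k => by
    obtain ⟨-, h⟩ | ⟨-, h⟩ := hgs k <;> rw [h] <;> assumption
  have hratio : ∀ k, ∀ u ∈ Icc a d, ∀ v ∈ Icc a d, |u - v| ≤ ε₁ →
      ds k u ≤ (2 - 2*ε) / (2 - 3*ε) * ds k v := fun k u hu v hv huv => by
    rw [← div_le_iff₀ (hpos k v hv)]
    obtain ⟨-, h⟩ | ⟨-, h⟩ := hgs k <;> rw [h]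
    exacts [hmodf u hu v hv huv, hmodg u hu v hv huv]
  intro y hy hyx n
  exact prod_orbit_le_div_pow_of_ratio_le (convex_Icc a d) hH0 hHs hmaps hderiv
    (fun k u hu => (hpos k u hu).le) hratio (by linarith) (by linarith) (by linarith) hε₁.le
    hx hhyp n y hy hyx

/-- Hyperbolicity-propagation lemma (Lemma 4.3): if the derivatives of the random
compositions at `x` decay like `C/(2-2ε)ⁿ`, then at every point `y` with
`|y - x| ≤ ε₁/C` they decay like `C/(2-3ε)ⁿ`. -/
theorem stmt_18 (a d ε ε₁ C : ℝ) (had : a < d)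
    (hε0 : 0 < ε) (hε3 : ε < 1/3) (hε₁ : 0 < ε₁) (hC : 1 ≤ C)
    (f g f' g' : ℝ → ℝ)
    (hfmaps : MapsTo f (Icc a d) (Icc a d))
    (hgmaps : MapsTo g (Icc a d) (Icc a d))
    (hfderiv : ∀ x ∈ Icc a d, HasDerivWithinAt f (f' x) (Icc a d) x)
    (hgderiv : ∀ x ∈ Icc a d, HasDerivWithinAt g (g' x) (Icc a d) x)
    (hf'pos : ∀ x ∈ Icc a d, 0 < f' x)
    (hg'pos : ∀ x ∈ Icc a d, 0 < g' x)
    -- modulus of continuity at scale ε₁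
    (hmodf : ∀ y ∈ Icc a d, ∀ z ∈ Icc a d, |y - z| ≤ ε₁ →
      f' y / f' z ≤ (2 - 2*ε) / (2 - 3*ε))
    (hmodg : ∀ y ∈ Icc a d, ∀ z ∈ Icc a d, |y - z| ≤ ε₁ →
      g' y / g' z ≤ (2 - 2*ε) / (2 - 3*ε))
    -- each gs i is f or g, with ds i its derivative
    (gs ds : ℕ → ℝ → ℝ)
    (hgs : ∀ i, (gs i = f ∧ ds i = f') ∨ (gs i = g ∧ ds i = g'))
    -- H n = gs (n-1) ∘ ⋯ ∘ gs 0
    (H : ℕ → ℝ → ℝ)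
    (hH0 : ∀ x, H 0 x = x)
    (hHs : ∀ n x, H (n+1) x = gs n (H n x))
    (x : ℝ) (hx : x ∈ Icc a d)
    (hhyp : ∀ n : ℕ, (∏ k ∈ Finset.range n, ds k (H k x)) ≤ C / (2 - 2*ε)^n) :
    ∀ y ∈ Icc a d, |y - x| ≤ ε₁ / C →
      ∀ n : ℕ, (∏ k ∈ Finset.range n, ds k (H k y)) ≤ C / (2 - 3*ε)^n :=
  stmt_18_general a d ε ε₁ C hε3 hε₁ hC f g f' g' hfmaps hgmaps hfderiv hgderiv hf'pos hg'pos hmodf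
    hmodg gs ds hgs H hH0 hHs x hx hhyp
end

section
/- Let g be a C^1 diffeomorphism of the circle such that both g and g⁻¹ belong to the class D_η(S¹), meaning that for each of them there are closed intervals of length ≤ η at distance ≥ 2η from each other such that the map sends the complement of the first interval into the second with derivative strictly less than 1 (on the closure of that complement). Then g has exactly two fixed points, one hyperbolically attracting and one hyperbolically repelling. -/
open Set

lemma lift_int' {f : ℝ → ℝ} (hf : ∀ x, f (x + 1) = f x + 1) :
    ∀ (n : ℤ) (x : ℝ), f (x + n) = f x + n := by
  have key : ∀ x : ℝ, f (x - 1) = f x - 1 := by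
    intro x
    have h := hf (x - 1)
    have e : x - 1 + 1 = x := by ring
    rw [e] at h; linarith
  intro n
  induction n using Int.induction_on with
  | zero => intro x; simp
  | succ k ih =>
    intro x
    have e : x + (((k : ℤ) + 1 : ℤ) : ℝ) = (x + ((k : ℤ) : ℝ)) + 1 := by push_cast; ring
    rw [e, hf, ih]; push_cast; ring
  | pred k ih =>
    intro x
    have e : x + ((-(k : ℤ) - 1 : ℤ) : ℝ) = (x + ((-k : ℤ) : ℝ)) - 1 := by push_cast; ring
    rw [e, key, ih]; push_cast; ring

lemma deriv_per' {f f' : ℝ → ℝ} (hf : ∀ x, f (x + 1) = f x + 1)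
    (hd : ∀ x, HasDerivAt f (f' x) x) (n : ℤ) (x : ℝ) : f' (x + n) = f' x := by
  have h1 : HasDerivAt (fun y => f (y + (n : ℝ))) (f' (x + n)) x := by
    have := (hd (x + n)).comp x ((hasDerivAt_id x).add_const (n : ℝ))
    simp at this; exact this
  have h2 : HasDerivAt (fun y => f (y + (n : ℝ))) (f' x) x := by
    have e : (fun y : ℝ => f (y + (n : ℝ))) = fun y => f y + n := funext (fun y => lift_int' hf n y)
    rw [e]; exact (hd x).add_const _
  exact h1.unique h2

lemma int_abs_lt_one' {m : ℤ} (h : |(m : ℝ)| < 1) : m = 0 := by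
  have h2 : ((|m| : ℤ) : ℝ) < 1 := by rwa [← Int.cast_abs] at h
  have h3 : |m| < 1 := by exact_mod_cast h2
  exact Int.abs_lt_one_iff.mp h3

lemma eq_of_Ico' {x y : ℝ} (hx : x ∈ Ico (0:ℝ) 1) (hy : y ∈ Ico (0:ℝ) 1) {m : ℤ}
    (h : x - y = m) : x = y := by
  have : m = 0 := by
    apply int_abs_lt_one'
    rw [← h, abs_lt]
    exact ⟨by linarith [hx.1, hy.2], by linarith [hx.2, hy.1]⟩
  rw [this] at h; push_cast at h; linarith

lemma fix_unique' {f f' : ℝ → ℝ} (hd : ∀ x, HasDerivAt f (f' x) x)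
    {a b : ℝ} (hcontr : ∀ x ∈ Icc a b, f' x < 1)
    {u v : ℝ} (hu : u ∈ Icc a b) (hv : v ∈ Icc a b) (c : ℝ)
    (hfu : f u = u + c) (hfv : f v = v + c) : u = v := by
  have key : ∀ u v : ℝ, u ∈ Icc a b → v ∈ Icc a b → f u = u + c → f v = v + c → u < v → False := by
    intro u v hu hv hfu hfv huv
    have hdiff : Differentiable ℝ f := fun x => (hd x).differentiableAt
    obtain ⟨w, hw, hsl⟩ := exists_hasDerivAt_eq_slope f f' huv hdiff.continuous.continuousOn
      (fun x _ => hd x)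
    have h1 : f' w = 1 := by
      rw [hsl, hfv, hfu, div_eq_one_iff_eq (sub_ne_zero.mpr (ne_of_gt huv))]; ring
    have hwm : w ∈ Icc a b := ⟨le_trans hu.1 hw.1.le, le_trans hw.2.le hv.2⟩
    linarith [hcontr w hwm]
  rcases lt_trichotomy u v with h | h | h
  · exact absurd (key u v hu hv hfu hfv h) id
  · exact h
  · exact absurd (key v u hv hu hfv hfu h) id

lemma fix_exists' {f : ℝ → ℝ} (hc : Continuous f) {a b c : ℝ} (hab : a ≤ b)
    (h1 : a + c ≤ f a) (h2 : f b ≤ b + c) : ∃ u ∈ Icc a b, f u = u + c := by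
  have hcont : ContinuousOn (fun x => f x - x) (Icc a b) := (hc.sub continuous_id).continuousOn
  have hmem : c ∈ Icc ((fun x => f x - x) b) ((fun x => f x - x) a) :=
    ⟨by simp only []; linarith, by simp only []; linarith⟩
  obtain ⟨u, hu, hfu⟩ := intermediate_value_Icc' hab hcont hmem
  exact ⟨u, hu, by simp only [] at hfu; linarith⟩


set_option maxHeartbeats 1000000 in
/-- Lemma 5.7, stated in terms of degree-one lifts `g, ginv : ℝ → ℝ` of a `C^1` circle
diffeomorphism and its inverse: if both `g` and `g⁻¹` belong to the class `D_η(S¹)` —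
there are closed arcs of length `≤ η`, at distance `≥ 2η` from each other, such that the
map sends the complement of the first into the second with derivative `< 1` there — then
`g` has exactly two fixed points on the circle, one hyperbolically attracting and one
hyperbolically repelling. -/
theorem stmt_19 (η : ℝ) (hη : 0 < η)
    (g ginv g' ginv' : ℝ → ℝ)
    (hgper : ∀ x, g (x + 1) = g x + 1)
    (hginvper : ∀ x, ginv (x + 1) = ginv x + 1)
    (hgderiv : ∀ x, HasDerivAt g (g' x) x)
    (hginvderiv : ∀ x, HasDerivAt ginv (ginv' x) x)
    (hg'pos : ∀ x, 0 < g' x)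
    (hginv'pos : ∀ x, 0 < ginv' x)
    (hg'cont : Continuous g') (hginv'cont : Continuous ginv')
    (hinv1 : ∀ x, ginv (g x) = x) (hinv2 : ∀ x, g (ginv x) = x)
    -- g ∈ D_η(S¹): arcs I' = [aI, aI+lI] and J' = [bJ, bJ+lJ] (mod 1)
    (aI lI bJ lJ : ℝ) (hlI0 : 0 ≤ lI) (hlIη : lI ≤ η) (hlJ0 : 0 ≤ lJ) (hlJη : lJ ≤ η)
    (hsep1 : aI + lI + 2*η ≤ bJ) (hsep2 : bJ + lJ + 2*η ≤ aI + 1)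
    (kg : ℤ)
    (hmapsg : ∀ x ∈ Icc (aI + lI) (aI + 1), g x ∈ Icc (bJ + kg) (bJ + lJ + kg))
    (hcontrg : ∀ x ∈ Icc (aI + lI) (aI + 1), g' x < 1)
    -- g⁻¹ ∈ D_η(S¹): arcs I'(g⁻¹) = [aI₂, aI₂+lI₂] and J'(g⁻¹) = [bJ₂, bJ₂+lJ₂] (mod 1)
    (aI₂ lI₂ bJ₂ lJ₂ : ℝ) (hlI₂0 : 0 ≤ lI₂) (hlI₂η : lI₂ ≤ η)
    (hlJ₂0 : 0 ≤ lJ₂) (hlJ₂η : lJ₂ ≤ η)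
    (hsep1₂ : aI₂ + lI₂ + 2*η ≤ bJ₂) (hsep2₂ : bJ₂ + lJ₂ + 2*η ≤ aI₂ + 1)
    (kginv : ℤ)
    (hmapsginv : ∀ x ∈ Icc (aI₂ + lI₂) (aI₂ + 1),
      ginv x ∈ Icc (bJ₂ + kginv) (bJ₂ + lJ₂ + kginv))
    (hcontrginv : ∀ x ∈ Icc (aI₂ + lI₂) (aI₂ + 1), ginv' x < 1) :
    ∃ p ∈ Ico (0:ℝ) 1, ∃ q ∈ Ico (0:ℝ) 1, p ≠ q ∧
      (∃ mp : ℤ, g p = p + mp) ∧ (∃ mq : ℤ, g q = q + mq) ∧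
      g' p < 1 ∧ 1 < g' q ∧
      ∀ x ∈ Ico (0:ℝ) 1, (∃ k : ℤ, g x = x + k) → (x = p ∨ x = q) := by
  -- basic numeric facts
  have hη4 : η ≤ 1/4 := by linarith
  have hgdiff : Differentiable ℝ g := fun x => (hgderiv x).differentiableAt
  have hginvdiff : Differentiable ℝ ginv := fun x => (hginvderiv x).differentiableAt
  have hgcont : Continuous g := hgdiff.continuous
  have hginvcont : Continuous ginv := hginvdiff.continuous
  have gint := lift_int' hgper
  have ginvint := lift_int' hginvper
  have g'per := deriv_per' hgper hgderiv
  have hginvmono : StrictMono ginv :=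
    strictMono_of_deriv_pos (fun x => by rw [(hginvderiv x).deriv]; exact hginv'pos x)
  -- the arcs J, J₂ sit inside the complement arcs
  have hbJsub : Icc bJ (bJ + lJ) ⊆ Icc (aI + lI) (aI + 1) := by
    intro y hy; exact ⟨by linarith [hy.1], by linarith [hy.2]⟩
  have hbJ₂sub : Icc bJ₂ (bJ₂ + lJ₂) ⊆ Icc (aI₂ + lI₂) (aI₂ + 1) := by
    intro y hy; exact ⟨by linarith [hy.1], by linarith [hy.2]⟩
  -- attracting fixed point p0 in J
  obtain ⟨p0, hp0mem, hp0fix⟩ :=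
    fix_exists' hgcont (by linarith : bJ ≤ bJ + lJ)
      ((hmapsg bJ (hbJsub ⟨le_refl _, by linarith⟩)).1)
      (by have := (hmapsg (bJ + lJ) (hbJsub ⟨by linarith, le_refl _⟩)).2; linarith)
  -- repelling: fixed point q0 of ginv in J₂
  obtain ⟨q0, hq0mem, hq0fix⟩ :=
    fix_exists' hginvcont (by linarith : bJ₂ ≤ bJ₂ + lJ₂)
      ((hmapsginv bJ₂ (hbJ₂sub ⟨le_refl _, by linarith⟩)).1)
      (by have := (hmapsginv (bJ₂ + lJ₂) (hbJ₂sub ⟨by linarith, le_refl _⟩)).2; linarith)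
  set p : ℝ := Int.fract p0 with hpdef
  have hpIco : p ∈ Ico (0:ℝ) 1 := ⟨Int.fract_nonneg p0, Int.fract_lt_one p0⟩
  have hpeq : p = p0 + ((-⌊p0⌋ : ℤ) : ℝ) := by
    rw [hpdef, Int.fract]; push_cast; ring
  have gp : g p = p + kg := by
    rw [hpeq, gint (-⌊p0⌋) p0, hp0fix]; push_cast; ring
  have g'p : g' p < 1 := by
    have : g' p = g' p0 := by rw [hpeq]; exact g'per (-⌊p0⌋) p0
    rw [this]; exact hcontrg p0 (hbJsub hp0mem)
  -- q
  set z : ℝ := q0 + (kginv : ℝ) with hzdef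
  have gz : g z = q0 := by rw [← hq0fix]; exact hinv2 q0
  set q : ℝ := Int.fract z with hqdef
  have hqIco : q ∈ Ico (0:ℝ) 1 := ⟨Int.fract_nonneg z, Int.fract_lt_one z⟩
  have hqeq : q = z + ((-⌊z⌋ : ℤ) : ℝ) := by rw [hqdef, Int.fract]; push_cast; ring
  have gq : g q = q + ((-kginv - ⌊z⌋ + ⌊z⌋ : ℤ) : ℝ) := by
    rw [hqeq, gint (-⌊z⌋) z, gz]; push_cast; ring
  have gq' : g q = q + ((-kginv : ℤ) : ℝ) := by rw [gq]; push_cast; ring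
  have hginv'q0 : ginv' q0 < 1 := hcontrginv q0 (hbJ₂sub hq0mem)
  have g'q : 1 < g' q := by
    have hcomp : HasDerivAt (fun y => ginv (g y)) (ginv' (g z) * g' z) z :=
      (hginvderiv (g z)).comp z (hgderiv z)
    have hid : (fun y : ℝ => ginv (g y)) = fun y => y := funext hinv1
    rw [hid] at hcomp
    have hone : ginv' (g z) * g' z = 1 := hcomp.unique (hasDerivAt_id z)
    rw [gz] at hone
    have h1 : g' q = g' z := by rw [hqeq]; exact g'per (-⌊z⌋) z
    rw [h1]
    nlinarith [hginv'pos q0, hg'pos z]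
  have hpq : p ≠ q := by
    intro h; rw [h] at g'p; linarith
  -- uniqueness in J
  have hcontrJ : ∀ y ∈ Icc bJ (bJ + lJ), g' y < 1 := fun y hy => hcontrg y (hbJsub hy)
  have hcontrJ₂ : ∀ y ∈ Icc bJ₂ (bJ₂ + lJ₂), ginv' y < 1 :=
    fun y hy => hcontrginv y (hbJ₂sub hy)
  have uniqJ : ∀ x ∈ Ico (0:ℝ) 1, ∀ k : ℤ, g x = x + k →
      ∀ n : ℤ, x + n ∈ Icc bJ (bJ + lJ) → x = p := by
    intro x hx k hk n hn
    have hmem := hmapsg (x + n) (hbJsub hn)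
    rw [gint n x, hk] at hmem
    have hkkg : k = kg := by
      have h1 := hmem.1; have h2 := hmem.2
      have habs : |((k - kg : ℤ) : ℝ)| < 1 := by
        rw [abs_lt]; push_cast
        constructor <;> linarith [hn.1, hn.2, hlJη, hη4]
      have := int_abs_lt_one' habs; omega
    have hxfix : g (x + n) = (x + n) + (kg : ℝ) := by
      rw [gint n x, hk, hkkg]; push_cast; ring
    have hxp0 : x + n = p0 := fix_unique' hgderiv hcontrJ hn hp0mem (kg : ℝ) hxfix hp0fix
    apply eq_of_Ico' hx hpIco (m := ⌊p0⌋ - n)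
    rw [hpdef, Int.fract]; push_cast; linarith
  have uniqJ₂ : ∀ x ∈ Ico (0:ℝ) 1, ∀ k : ℤ, ginv x = x + k →
      ∀ n : ℤ, x + n ∈ Icc bJ₂ (bJ₂ + lJ₂) → x = q := by
    intro x hx k hk n hn
    have hmem := hmapsginv (x + n) (hbJ₂sub hn)
    rw [ginvint n x, hk] at hmem
    have hkkg : k = kginv := by
      have h1 := hmem.1; have h2 := hmem.2
      have habs : |((k - kginv : ℤ) : ℝ)| < 1 := by
        rw [abs_lt]; push_cast
        constructor <;> linarith [hn.1, hn.2, hlJ₂η, hη4]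
      have := int_abs_lt_one' habs; omega
    have hxfix : ginv (x + n) = (x + n) + (kginv : ℝ) := by
      rw [ginvint n x, hk, hkkg]; push_cast; ring
    have hxq0 : x + n = q0 := fix_unique' hginvderiv hcontrJ₂ hn hq0mem (kginv : ℝ) hxfix hq0fix
    apply eq_of_Ico' hx hqIco (m := ⌊z⌋ - kginv - n)
    rw [hqdef, Int.fract, hzdef]; push_cast; linarith
  -- construction of a point in I ∩ J₂ (mod 1)
  have hga : bJ + (kg : ℝ) ≤ g (aI + lI) := (hmapsg _ ⟨le_refl _, by linarith⟩).1
  have hgb : g (aI + 1) ≤ bJ + lJ + (kg : ℝ) := (hmapsg _ ⟨by linarith, le_refl _⟩).2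
  have hginv1' : aI + 1 ≤ ginv (bJ + lJ + (kg : ℝ)) := by
    have := hginvmono.monotone hgb; rwa [hinv1] at this
  have hginv2' : ginv (bJ + (kg : ℝ)) ≤ aI + lI := by
    have := hginvmono.monotone hga; rwa [hinv1] at this
  obtain ⟨zz, t', hz1, hz2a, hz2b⟩ :
      ∃ zz : ℝ, ∃ t' : ℤ, zz ∈ Icc (aI₂ + lI₂) (aI₂ + 1) ∧
        bJ + lJ + (kg : ℝ) + t' ≤ zz ∧ zz ≤ bJ + (kg : ℝ) + 1 + t' := by
    set c : ℝ := aI₂ + lI₂ with hc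
    set e : ℝ := bJ + lJ + (kg : ℝ) with he
    set t : ℤ := ⌈c - e⌉ with ht
    have hd1 : c ≤ e + t := by
      have := Int.le_ceil (c - e); rw [← ht] at this; linarith
    have hd2 : e + t < c + 1 := by
      have := Int.ceil_lt_add_one (c - e); rw [← ht] at this; linarith
    by_cases hcase : e + t ≤ aI₂ + 1
    · exact ⟨e + t, t, ⟨hd1, hcase⟩, by linarith, by linarith⟩
    · refine ⟨c, t - 1, ⟨le_refl _, by linarith⟩, ?_, ?_⟩
      · push_cast; linarith
      · push_cast; push_neg at hcase; linarith
  have hvmem := hmapsginv zz hz1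
  have huval : ginv (zz + ((-t' : ℤ) : ℝ)) = ginv zz - t' := by
    rw [ginvint]; push_cast; ring
  have humem : aI + 1 ≤ ginv zz - (t' : ℝ) ∧ ginv zz - (t' : ℝ) ≤ aI + lI + 1 := by
    constructor
    · have h1 : bJ + lJ + (kg : ℝ) ≤ zz + ((-t' : ℤ) : ℝ) := by push_cast; linarith
      have := hginvmono.monotone h1
      rw [huval] at this; linarith
    · have h2 : zz + ((-t' : ℤ) : ℝ) ≤ bJ + (kg : ℝ) + 1 := by push_cast; linarith
      have h3 := hginvmono.monotone h2
      rw [huval] at h3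
      have h4 : ginv (bJ + (kg : ℝ) + 1) = ginv (bJ + (kg : ℝ)) + 1 := hginvper _
      rw [h4] at h3; linarith
  -- witness: u ∈ I, v ∈ J₂, u - v integer
  have noII₂ : ∀ x : ℝ, ∀ n m : ℤ, x + n ∈ Icc aI (aI + lI) →
      x + m ∈ Icc aI₂ (aI₂ + lI₂) → False := by
    intro x n m hn hm
    set u : ℝ := ginv zz - t' - 1 with hu
    set v : ℝ := ginv zz - kginv with hv
    have humem' : u ∈ Icc aI (aI + lI) := ⟨by rw [hu]; linarith [humem.1], by rw [hu]; linarith [humem.2]⟩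
    have hvmem' : v ∈ Icc bJ₂ (bJ₂ + lJ₂) := ⟨by rw [hv]; linarith [hvmem.1], by rw [hv]; linarith [hvmem.2]⟩
    set y : ℝ := x + n - u + v with hy
    have hy1 : bJ₂ - η ≤ y := by
      rw [hy]; have := hn.1; have := humem'.2; have := hvmem'.1; linarith
    have hy2 : y ≤ bJ₂ + lJ₂ + η := by
      rw [hy]; have := hn.2; have := humem'.1; have := hvmem'.2; linarith
    have hyeq : y = x + m + ((n - m - (kginv - t' - 1) : ℤ) : ℝ) := by
      rw [hy, hu, hv]; push_cast; ring
    set M : ℤ := n - m - (kginv - t' - 1) with hM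
    rcases le_or_gt M 0 with hM0 | hM0
    · have hMr : (M : ℝ) ≤ 0 := by exact_mod_cast hM0
      have := hm.2
      rw [hyeq] at hy1
      linarith
    · have hMr : (1 : ℝ) ≤ (M : ℝ) := by exact_mod_cast hM0
      have := hm.1
      rw [hyeq] at hy2
      linarith
  -- assemble
  refine ⟨p, hpIco, q, hqIco, hpq, ⟨kg, gp⟩, ⟨-kginv, gq'⟩, g'p, g'q, ?_⟩
  rintro x hx ⟨k, hk⟩
  set n : ℤ := ⌈aI - x⌉ with hn
  have hn1 : aI ≤ x + n := by
    have := Int.le_ceil (aI - x); rw [← hn] at this; linarith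
  have hn2 : x + n < aI + 1 := by
    have := Int.ceil_lt_add_one (aI - x); rw [← hn] at this; linarith
  by_cases hA : aI + lI ≤ x + n
  · left
    have hmem := hmapsg (x + n) ⟨hA, hn2.le⟩
    rw [gint n x, hk] at hmem
    apply uniqJ x hx k hk (n + k - kg)
    constructor
    · push_cast; linarith [hmem.1]
    · push_cast; linarith [hmem.2]
  · push_neg at hA
    have hxI : x + n ∈ Icc aI (aI + lI) := ⟨hn1, hA.le⟩
    have hginvx : ginv x = x + ((-k : ℤ) : ℝ) := by
      have h1 : ginv (x + (k : ℝ)) = x := by rw [← hk, hinv1]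
      have h2 : ginv (x + (k : ℝ)) = ginv x + k := ginvint k x
      rw [h2] at h1; push_cast; linarith
    set m : ℤ := ⌈aI₂ - x⌉ with hm
    have hm1 : aI₂ ≤ x + m := by
      have := Int.le_ceil (aI₂ - x); rw [← hm] at this; linarith
    have hm2 : x + m < aI₂ + 1 := by
      have := Int.ceil_lt_add_one (aI₂ - x); rw [← hm] at this; linarith
    by_cases hB : aI₂ + lI₂ ≤ x + m
    · right
      have hmem := hmapsginv (x + m) ⟨hB, hm2.le⟩
      rw [ginvint m x, hginvx] at hmem
      apply uniqJ₂ x hx (-k) hginvx (m + (-k) - kginv)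
      constructor
      · push_cast; push_cast at hmem; linarith [hmem.1]
      · push_cast; push_cast at hmem; linarith [hmem.2]
    · push_neg at hB
      exact absurd (noII₂ x n m hxI ⟨hm1, hB.le⟩) id
end
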